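/- arXiv:0805.3743 — 5 statements merged into one kernel-verified Lean document; each statement's English description precedes it below -/
import Mathlib

section
/- For all positive integers m and all nonnegative integers n, the following identity of rational numbers holds: \sum_{p=0}^{\lfloor n/4 \rfloor} (m/(5p+m)) \binom{5p+m}{p} \binom{n+p+m-1}{n-4p} = \sum_{p=0}^{\lfloor n/2 \rfloor} (-1)^p (m/(m+n)) \binom{m+n+p-1}{p} \binom{m+2n-2p-1}{n-2p}. -/
/-!
Both sides are `[x^n] h^m` for the power series `h` with `(1 - x) h = 1 + x^4 h^5`.

Writing `G = 1 + t G^5` for the Fuss–Catalan series, whose `m`-th power has coefficients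
`C_{m,5}(p)` by Lagrange inversion, one may take `(1 - x) h = G(x^4 / (1 - x)^5)`; expanding
`h^m = (1 - x)^{-m} G(x^4 / (1 - x)^5)^m` gives the left-hand side.

The quintic equation for `h` is equivalent to the quartic `h (1 - x h)(1 + x^2 h^2) = 1`, so
`w = x h` satisfies `w = x φ(w)` with `φ(t) = ((1 - t)(1 + t^2))⁻¹`. Lagrange inversion gives
`[x^n] h^m = [x^{n+m}] w^m = m/(m+n) [t^n] φ(t)^{m+n}`, and expanding
`(1 - t)^{-(m+n)} (1 + t^2)^{-(m+n)}` gives the right-hand side.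
-/

open PowerSeries Finset

theorem Finset.sum_range_succ_eq_sum_range_div_succ {M : Type*} [AddCommMonoid M] {f : ℕ → M}
    {n k : ℕ} (hk : 0 < k) (hf : ∀ p, n < k * p → f p = 0) :
    ∑ p ∈ range (n + 1), f p = ∑ p ∈ range (n / k + 1), f p := by
  refine (sum_subset (range_subset_range.2 (by have := Nat.div_le_self n k; omega))
    fun p _ hp => hf p ?_).symm
  rw [mem_range, not_lt, Nat.add_one_le_iff, Nat.div_lt_iff_lt_mul hk] at hp
  linarith

namespace PowerSeries

variable {K : Type*} [Field K]

theorem constantCoeff_eq_zero_of_eq_X_mul {w g : K⟦X⟧} (h : w = X * g) : constantCoeff w = 0 := by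
  rw [h, map_mul, constantCoeff_X, zero_mul]

theorem coeff_pow_of_constantCoeff_eq_zero {a : K⟦X⟧} (ha : constantCoeff a = 0) {n d : ℕ}
    (hnd : n < d) : coeff n (a ^ d) = 0 :=
  X_pow_dvd_iff.1 (pow_dvd_pow_of_dvd (X_dvd_iff.2 ha) d) n hnd

theorem coeff_subst_eq_sum {a : K⟦X⟧} (ha : constantCoeff a = 0) (f : K⟦X⟧) (n : ℕ) :
    coeff n (f.subst a) = ∑ d ∈ range (n + 1), coeff d f * coeff n (a ^ d) := by
  rw [coeff_subst' (HasSubst.of_constantCoeff_zero' ha)]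
  refine finsum_eq_sum_of_support_subset _ fun d hd => ?_
  by_contra h
  simp_all [coeff_pow_of_constantCoeff_eq_zero ha]

theorem coeff_mul_subst_eq_sum {a : K⟦X⟧} (ha : constantCoeff a = 0) (A f : K⟦X⟧) (n : ℕ) :
    coeff n (A * f.subst a) = ∑ d ∈ range (n + 1), coeff d f * coeff n (A * a ^ d) := by
  simp only [coeff_mul, mul_sum]
  rw [sum_comm]
  refine sum_congr rfl fun ij hij => ?_
  have hj : ij.2 + 1 ≤ n + 1 := by
    have := mem_antidiagonal.1 hij
    omega
  rw [coeff_subst_eq_sum ha, mul_sum, ← sum_range_add_sum_Ico _ hj, sum_eq_zero (s := Ico _ _),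
    add_zero]
  · exact sum_congr rfl fun _ _ => mul_left_comm _ _ _
  · intro d hd
    rw [coeff_pow_of_constantCoeff_eq_zero ha (by simp at hd; omega), mul_zero, mul_zero]

theorem constantCoeff_subst_of_constantCoeff_eq_zero {a : K⟦X⟧} (ha : constantCoeff a = 0)
    (f : K⟦X⟧) : constantCoeff (f.subst a) = constantCoeff f := by
  simpa using coeff_mul_subst_eq_sum ha 1 f 0

theorem subst_one {a : K⟦X⟧} (ha : HasSubst a) : (1 : K⟦X⟧).subst a = 1 := by
  rw [← coe_substAlgHom ha, map_one]

theorem subst_one_add_X_pow {a : K⟦X⟧} (ha : HasSubst a) (N : ℕ) :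
    ((1 + X : K⟦X⟧) ^ N).subst a = (1 + a) ^ N := by
  rw [subst_pow ha, subst_add ha, subst_one ha, subst_X ha]

theorem subst_inv {a : K⟦X⟧} (ha : constantCoeff a = 0) {f : K⟦X⟧} (hf : constantCoeff f ≠ 0) :
    f⁻¹.subst a = (f.subst a)⁻¹ := by
  have ha' := HasSubst.of_constantCoeff_zero' ha
  rw [eq_inv_iff_mul_eq_one (by rwa [constantCoeff_subst_of_constantCoeff_eq_zero ha]),
    ← subst_mul ha', PowerSeries.inv_mul_cancel f hf, subst_one ha']

theorem coeff_one_add_X_pow (N k : ℕ) : coeff k ((1 + X : K⟦X⟧) ^ N) = N.choose k := by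
  rw [show (1 + X : K⟦X⟧) ^ N = ((1 + Polynomial.X) ^ N : Polynomial K) by push_cast; rfl,
    Polynomial.coeff_coe, Polynomial.coeff_one_add_X_pow]

theorem coeff_inv_one_sub_X_pow (d k : ℕ) :
    coeff k ((1 - X : K⟦X⟧)⁻¹ ^ d) = (d + k - 1).choose k := by
  rcases d with _ | d
  · rcases k with _ | k <;> simp
  rw [(inv_eq_iff_mul_eq_one (by simp)).2 (mk_one_mul_one_sub_eq_one K),
    mk_one_pow_eq_mk_choose_add, coeff_mk, show d + 1 + k - 1 = d + k by omega,
    Nat.choose_symm_add]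

theorem coeff_inv_one_sub_X_mul_one_add_X_sq_pow (N n : ℕ) :
    coeff n (((1 - X) * (1 + X ^ 2) : K⟦X⟧)⁻¹ ^ N) =
      ∑ p ∈ range (n / 2 + 1),
        (-1 : K) ^ p * (N + p - 1).choose p * (N + (n - 2 * p) - 1).choose (n - 2 * p) := by
  have hsq : constantCoeff (-X ^ 2 : K⟦X⟧) = 0 := by simp
  have hsq' := HasSubst.of_constantCoeff_zero' hsq
  have hinv : (1 + X ^ 2 : K⟦X⟧)⁻¹ = ((1 - X)⁻¹ : K⟦X⟧).subst (-X ^ 2 : K⟦X⟧) := by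
    rw [subst_inv hsq (by simp), subst_sub hsq', subst_one hsq', subst_X hsq', sub_neg_eq_add]
  have hterm (p : ℕ) : (1 - X : K⟦X⟧)⁻¹ ^ N * (-X ^ 2) ^ p =
      C ((-1) ^ p) * (X ^ (2 * p) * (1 - X)⁻¹ ^ N) := by
    rw [neg_pow, ← pow_mul, map_pow, map_neg, map_one]
    ring
  rw [PowerSeries.mul_inv_rev, mul_pow, hinv, ← subst_pow hsq', mul_comm,
    coeff_mul_subst_eq_sum hsq, sum_range_succ_eq_sum_range_div_succ two_pos]
  · refine sum_congr rfl fun p hp => ?_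
    have h2p : 2 * p ≤ n := by
      have := mem_range.1 hp
      omega
    rw [hterm, coeff_C_mul, coeff_X_pow_mul', if_pos h2p, coeff_inv_one_sub_X_pow,
      coeff_inv_one_sub_X_pow]
    ring
  · intro p hp
    rw [hterm, coeff_C_mul, coeff_X_pow_mul', if_neg (by omega), mul_zero, mul_zero]

theorem exists_eq_X_mul_subst {φ : K⟦X⟧} (hφ : constantCoeff φ ≠ 0) :
    ∃ w : K⟦X⟧, w = X * φ.subst w := by
  have hP : constantCoeff (X * φ⁻¹) = 0 := by simp
  have hP' : IsUnit (coeff 1 (X * φ⁻¹)) := by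
    simpa [coeff_succ_X_mul (n := 0), constantCoeff_inv] using hφ
  set w := (X * φ⁻¹).substInvOfIsUnit hP'
  have hw : constantCoeff w = 0 := constantCoeff_substInvOfIsUnit _ hP'
  have hw' := HasSubst.of_constantCoeff_zero' hw
  have hright := subst_substInvOfIsUnit_right _ hP hP'
  rw [subst_mul hw', subst_X hw', subst_inv hw hφ] at hright
  refine ⟨w, ?_⟩
  rw [← hright, mul_assoc, PowerSeries.inv_mul_cancel, mul_one]
  rwa [constantCoeff_subst_of_constantCoeff_eq_zero hw]

theorem exists_eq_X_mul_one_add_pow (s : ℕ) : ∃ V : K⟦X⟧, V = X * (1 + V) ^ s := by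
  obtain ⟨V, hV⟩ := exists_eq_X_mul_subst (φ := (1 + X : K⟦X⟧) ^ s) (by simp)
  have hV' := HasSubst.of_constantCoeff_zero' (constantCoeff_eq_zero_of_eq_X_mul hV)
  exact ⟨V, by rwa [subst_one_add_X_pow hV'] at hV⟩

theorem derivative_X_mul (u : K⟦X⟧) : d⁄dX K (X * u) = u + X * d⁄dX K u := by
  simp [Derivation.leibniz, add_comm]

section LagrangeInversion

variable [CharZero K]

/-- For `k > 0` the coefficient is the residue of the derivative `-(1/k) d/dX ((X u)⁻ᵏ)`, hence
zero. -/
theorem coeff_inv_pow_mul_derivative_X_mul {u : K⟦X⟧} (hu : constantCoeff u ≠ 0) (k : ℕ) :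
    coeff k (u⁻¹ ^ (k + 1) * d⁄dX K (X * u)) = if k = 0 then 1 else 0 := by
  have hinv : u⁻¹ * u = 1 := PowerSeries.inv_mul_cancel u hu
  rcases k with _ | k
  · simp [mul_add, hinv]
  have hsplit : u⁻¹ ^ (k + 2) * d⁄dX K (X * u) =
      u⁻¹ ^ (k + 1) + X * (u⁻¹ ^ (k + 2) * d⁄dX K u) := by
    rw [derivative_X_mul]
    linear_combination u⁻¹ ^ (k + 1) * hinv
  have hderiv : d⁄dX K (u⁻¹ ^ (k + 1)) = -(C ((k : K) + 1) * (u⁻¹ ^ (k + 2) * d⁄dX K u)) := by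
    rw [derivative_pow, derivative_inv', map_add, map_natCast, map_one]
    push_cast
    ring
  have hcoeff := coeff_derivative (u⁻¹ ^ (k + 1)) k
  rw [hderiv, map_neg, coeff_C_mul] at hcoeff
  rw [hsplit, map_add, coeff_succ_X_mul, if_neg k.succ_ne_zero]
  refine (mul_eq_zero.1 (?_ : ((k : K) + 1) * _ = 0)).resolve_left (Nat.cast_add_one_ne_zero k)
  linear_combination -hcoeff

variable {w φ : K⟦X⟧} (hw : w = X * φ.subst w) (hφ : constantCoeff φ ≠ 0)
include hw hφ

/-- The change of variables `t = w(x)` in the residue `[t^n] F = res F(t) t^{-(n+1)} dt`. -/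
theorem coeff_subst_mul_inv_pow_mul_derivative (F : K⟦X⟧) (n : ℕ) :
    coeff n (F.subst w * (φ.subst w)⁻¹ ^ (n + 1) * d⁄dX K w) = coeff n F := by
  set u : K⟦X⟧ := φ.subst w
  have hw0 := constantCoeff_eq_zero_of_eq_X_mul hw
  have hu : constantCoeff u ≠ 0 := by rwa [constantCoeff_subst_of_constantCoeff_eq_zero hw0]
  have hterm : ∀ d ∈ range (n + 1),
      coeff n (u⁻¹ ^ (n + 1) * d⁄dX K w * w ^ d) = if d = n then 1 else 0 := by
    intro d hd
    have hdn : d ≤ n := Nat.lt_succ_iff.1 (mem_range.1 hd)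
    have hcancel : u⁻¹ ^ d * u ^ d = 1 := by
      rw [← mul_pow, PowerSeries.inv_mul_cancel u hu, one_pow]
    have hsplit : u⁻¹ ^ (n + 1) * d⁄dX K w * w ^ d =
        X ^ d * (u⁻¹ ^ (n - d + 1) * d⁄dX K (X * u)) := by
      rw [← hw, hw, mul_pow, show n + 1 = (n - d + 1) + d by omega, pow_add]
      linear_combination (X ^ d * u⁻¹ ^ (n - d + 1) * d⁄dX K (X * u)) * hcancel
    rw [hsplit, coeff_X_pow_mul', if_pos hdn, coeff_inv_pow_mul_derivative_X_mul hu]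
    split_ifs <;> first | rfl | omega
  rw [mul_assoc, mul_comm, coeff_mul_subst_eq_sum hw0]
  simp +contextual [hterm]

theorem coeff_subst_of_eq_X_mul_subst (H : K⟦X⟧) (n : ℕ) :
    (n + 1) * coeff (n + 1) (H.subst w) = coeff n (d⁄dX K H * φ ^ (n + 1)) := by
  set u : K⟦X⟧ := φ.subst w
  have hw0 := constantCoeff_eq_zero_of_eq_X_mul hw
  have hw' := HasSubst.of_constantCoeff_zero' hw0
  have hu : constantCoeff u ≠ 0 := by rwa [constantCoeff_subst_of_constantCoeff_eq_zero hw0]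
  have hcancel : u ^ (n + 1) * u⁻¹ ^ (n + 1) = 1 := by
    rw [← mul_pow, PowerSeries.mul_inv_cancel u hu, one_pow]
  calc (n + 1) * coeff (n + 1) (H.subst w)
      = coeff n (d⁄dX K (H.subst w)) := by rw [coeff_derivative, mul_comm]
    _ = coeff n ((d⁄dX K H).subst w * d⁄dX K w) := by rw [derivative_subst hw']
    _ = coeff n ((d⁄dX K H * φ ^ (n + 1)).subst w * u⁻¹ ^ (n + 1) * d⁄dX K w) := by
      rw [subst_mul hw', subst_pow hw']
      congr 1
      linear_combination (-(d⁄dX K H).subst w * d⁄dX K w) * hcancel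
    _ = coeff n (d⁄dX K H * φ ^ (n + 1)) := coeff_subst_mul_inv_pow_mul_derivative hw hφ _ n

end LagrangeInversion

theorem coeff_one_add_pow_of_eq_X_mul_one_add_pow [CharZero K] {V : K⟦X⟧} {s : ℕ}
    (hV : V = X * (1 + V) ^ s) {m : ℕ} (hm : 0 < m) (p : ℕ) :
    coeff p ((1 + V) ^ m) = (m : K) / (s * p + m) * ((s * p + m).choose p : K) := by
  have hV0 := constantCoeff_eq_zero_of_eq_X_mul hV
  have hV' := HasSubst.of_constantCoeff_zero' hV0
  rcases p with _ | p
  · simp [coeff_zero_eq_constantCoeff, hV0, div_self (Nat.cast_ne_zero.2 hm.ne' : (m : K) ≠ 0)]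
  have hLB := coeff_subst_of_eq_X_mul_subst (w := V) (φ := (1 + X) ^ s) (H := (1 + X) ^ m)
    (by rwa [subst_one_add_X_pow hV']) (by simp) p
  have hderiv : d⁄dX K ((1 + X : K⟦X⟧) ^ m) * ((1 + X) ^ s) ^ (p + 1) =
      C (m : K) * (1 + X) ^ (s * (p + 1) + m - 1) := by
    rw [derivative_pow, map_add, derivative_X, derivative_one, zero_add, mul_one, ← pow_mul,
      ← map_natCast (C (R := K)), show s * (p + 1) + m - 1 = (m - 1) + s * (p + 1) by omega,
      pow_add]
    ring
  rw [hderiv, coeff_C_mul, coeff_one_add_X_pow, subst_one_add_X_pow hV'] at hLB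
  have hchoose : ((s * (p + 1) + m : ℕ) : K) * (s * (p + 1) + m - 1).choose p =
      (s * (p + 1) + m).choose (p + 1) * (p + 1) := by
    have := Nat.add_one_mul_choose_eq (s * (p + 1) + m - 1) p
    rw [show s * (p + 1) + m - 1 + 1 = s * (p + 1) + m by omega] at this
    exact_mod_cast this
  have hN : ((s * (p + 1) + m : ℕ) : K) ≠ 0 := by exact_mod_cast (by omega : s * (p + 1) + m ≠ 0)
  push_cast at hchoose hN ⊢
  field_simp
  refine mul_left_cancel₀ (Nat.cast_add_one_ne_zero p : (p : K) + 1 ≠ 0) ?_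
  linear_combination (s * (p + 1) + m : K) * hLB + m * hchoose

section FussCatalanSubstitution

variable {V : K⟦X⟧} (hV : V = X * (1 + V) ^ 5)
include hV

theorem one_sub_X_mul_eq_of_eq_X_mul_one_add_pow :
    (1 - X) * ((1 - X)⁻¹ * (1 + V.subst (X ^ 4 * (1 - X)⁻¹ ^ 5 : K⟦X⟧))) =
      1 + X ^ 4 * ((1 - X)⁻¹ * (1 + V.subst (X ^ 4 * (1 - X)⁻¹ ^ 5 : K⟦X⟧))) ^ 5 := by
  set Y : K⟦X⟧ := X ^ 4 * (1 - X)⁻¹ ^ 5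
  have hY' : HasSubst Y := HasSubst.of_constantCoeff_zero' (by simp [Y])
  have hVY : V.subst Y = Y * (1 + V.subst Y) ^ 5 := by
    conv_lhs => rw [hV, subst_mul hY', subst_X hY', subst_pow hY', subst_add hY', subst_one hY']
  have hinv : (1 - X : K⟦X⟧) * (1 - X)⁻¹ = 1 := PowerSeries.mul_inv_cancel _ (by simp)
  rw [← mul_assoc, hinv, one_mul]
  conv_lhs => rw [hVY]
  ring

theorem coeff_inv_one_sub_X_mul_one_add_subst_pow [CharZero K] {m : ℕ} (hm : 0 < m) (n : ℕ) :
    coeff n (((1 - X)⁻¹ * (1 + V.subst (X ^ 4 * (1 - X)⁻¹ ^ 5 : K⟦X⟧))) ^ m) =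
      ∑ p ∈ range (n / 4 + 1),
        (m : K) / (5 * p + m) * ((5 * p + m).choose p) * ((n + p + m - 1).choose (n - 4 * p)) := by
  set Y : K⟦X⟧ := X ^ 4 * (1 - X)⁻¹ ^ 5
  have hY : constantCoeff Y = 0 := by simp [Y]
  have hY' := HasSubst.of_constantCoeff_zero' hY
  have hsubst : (1 + V.subst Y) ^ m = ((1 + V) ^ m).subst Y := by
    rw [subst_pow hY', subst_add hY', subst_one hY']
  have hterm (p : ℕ) : (1 - X)⁻¹ ^ m * Y ^ p = X ^ (4 * p) * (1 - X)⁻¹ ^ (5 * p + m) := by ring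
  rw [mul_pow, hsubst, coeff_mul_subst_eq_sum hY, sum_range_succ_eq_sum_range_div_succ four_pos]
  · refine sum_congr rfl fun p hp => ?_
    have h4p : 4 * p ≤ n := by
      have := mem_range.1 hp
      omega
    rw [hterm, coeff_X_pow_mul', if_pos h4p, coeff_inv_one_sub_X_pow,
      coeff_one_add_pow_of_eq_X_mul_one_add_pow hV hm,
      show 5 * p + m + (n - 4 * p) - 1 = n + p + m - 1 by omega]
    push_cast
    ring
  · intro p hp
    rw [hterm, coeff_X_pow_mul', if_neg (by omega), mul_zero]

end FussCatalanSubstitution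

theorem subst_eq_inv_of_one_sub_X_mul_eq {h : K⟦X⟧} (hh : (1 - X) * h = 1 + X ^ 4 * h ^ 5) :
    (((1 - X) * (1 + X ^ 2) : K⟦X⟧)⁻¹).subst (X * h) = h := by
  have hw : constantCoeff (X * h) = 0 := by simp
  have hw' := HasSubst.of_constantCoeff_zero' hw
  have hq : ((1 - X) * (1 + X ^ 2) : K⟦X⟧).subst (X * h) = (1 - X * h) * (1 + (X * h) ^ 2) := by
    rw [subst_mul hw', subst_sub hw', subst_add hw', subst_pow hw', subst_one hw', subst_X hw']
  have hq0 : constantCoeff ((1 - X) * (1 + X ^ 2) : K⟦X⟧) ≠ 0 := by simp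
  rw [subst_inv hw hq0,
    inv_eq_iff_mul_eq_one (by rwa [constantCoeff_subst_of_constantCoeff_eq_zero hw]), hq]
  have hfactor : (X ^ 3 * (1 + X * h)) * (h * ((1 - X * h) * (1 + (X * h) ^ 2)) - 1) = 0 := by
    linear_combination X ^ 3 * hh
  have hne : X ^ 3 * (1 + X * h) ≠ 0 := by
    refine mul_ne_zero (pow_ne_zero _ X_ne_zero) fun h0 => ?_
    simpa using congrArg constantCoeff h0
  exact sub_eq_zero.1 ((mul_eq_zero.1 hfactor).resolve_left hne)

theorem coeff_pow_of_one_sub_X_mul_eq [CharZero K] {h : K⟦X⟧}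
    (hh : (1 - X) * h = 1 + X ^ 4 * h ^ 5) {m : ℕ} (hm : 0 < m) (n : ℕ) :
    coeff n (h ^ m) = ∑ p ∈ range (n / 2 + 1),
      (-1 : K) ^ p * (m / (m + n)) * (m + n + p - 1).choose p *
        (m + 2 * n - 2 * p - 1).choose (n - 2 * p) := by
  have hw' : HasSubst (X * h) := HasSubst.of_constantCoeff_zero' (by simp)
  have hLB := coeff_subst_of_eq_X_mul_subst (w := X * h) (φ := ((1 - X) * (1 + X ^ 2))⁻¹)
    (H := X ^ m) (by rw [subst_eq_inv_of_one_sub_X_mul_eq hh]) (by simp) (n + m - 1)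
  rw [show n + m - 1 + 1 = n + m by omega, subst_pow hw', subst_X hw', mul_pow,
    coeff_X_pow_mul', if_pos (by omega), Nat.add_sub_cancel, derivative_pow, derivative_X,
    mul_one, ← map_natCast (C (R := K)), mul_assoc, coeff_C_mul, coeff_X_pow_mul',
    if_pos (by omega), show n + m - 1 - (m - 1) = n by omega,
    coeff_inv_one_sub_X_mul_one_add_X_sq_pow, ← Nat.cast_add_one,
    show n + m - 1 + 1 = m + n by omega, Nat.cast_add] at hLB
  have hmn : (m + n : K) ≠ 0 := by exact_mod_cast (by omega : m + n ≠ 0)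
  rw [eq_div_of_mul_eq hmn ((mul_comm _ _).trans hLB), mul_sum, sum_div]
  refine sum_congr rfl fun p hp => ?_
  have h2p : 2 * p ≤ n := by
    have := mem_range.1 hp
    omega
  rw [show n + m + p - 1 = m + n + p - 1 by omega,
    show n + m + (n - 2 * p) - 1 = m + 2 * n - 2 * p - 1 by omega]
  ring

end PowerSeries

/-- **Sun's identity for generalized Catalan numbers `C_{m,5}`** (Formula (1)).
For all positive integers `m` and nonnegative integers `n`,
`∑_{p=0}^{⌊n/4⌋} (m/(5p+m)) C(5p+m, p) C(n+p+m-1, n-4p)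
  = ∑_{p=0}^{⌊n/2⌋} (-1)^p (m/(m+n)) C(m+n+p-1, p) C(m+2n-2p-1, n-2p)`. -/
theorem sun_identity_general (m : ℕ) (hm : 0 < m) (n : ℕ) :
    ∑ p ∈ Finset.range (n / 4 + 1),
        (m : ℚ) / (5 * p + m) * ((5 * p + m).choose p) * ((n + p + m - 1).choose (n - 4 * p)) =
      ∑ p ∈ Finset.range (n / 2 + 1),
        (-1 : ℚ) ^ p * (m / (m + n)) * ((m + n + p - 1).choose p) *
          ((m + 2 * n - 2 * p - 1).choose (n - 2 * p)) := by
  obtain ⟨V, hV⟩ := exists_eq_X_mul_one_add_pow (K := ℚ) 5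
  rw [← coeff_inv_one_sub_X_mul_one_add_subst_pow hV hm,
    coeff_pow_of_one_sub_X_mul_eq (one_sub_X_mul_eq_of_eq_X_mul_one_add_pow hV) hm]
end

section
/- For every nonnegative integer n, there exists an involution \phi on the set of improper colored binary trees with n internal vertices such that for every improper colored binary tree B, the color number of \phi(B) differs from the color number of B by exactly 1 (in particular \phi reverses the parity of the color number). Consequently, |ECB_n| - |OCB_n| = |CB'_n|, where ECB_n (resp. OCB_n) is the set of colored binary trees with n internal vertices whose color number is even (resp. odd), and CB'_n is the set of proper colored binary trees with n internal vertices. -/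
/-- A complete binary tree: every internal vertex has exactly a left and a right child. -/
inductive BinTree : Type
  | leaf : BinTree
  | node : BinTree → BinTree → BinTree

namespace BinTree

/-- The number of internal vertices of a complete binary tree. -/
def internals : BinTree → ℕ
  | leaf => 0
  | node l r => internals l + internals r + 1

/-- The subtree rooted at the vertex reached from the root by the given path,
where `false` means "go to the left child" and `true` means "go to the right child";
`none` if there is no such vertex. -/
def subtreeAt : BinTree → List Bool → Option BinTree
  | t, [] => some t
  | leaf, _ :: _ => none
  | node l _, false :: p => subtreeAt l p
  | node _ r, true :: p => subtreeAt r p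

/-- The list of (the paths from the root to) all vertices of a complete binary tree. -/
def vertices : BinTree → List (List Bool)
  | leaf => [[]]
  | node l r =>
      [] :: ((vertices l).map (List.cons false) ++ (vertices r).map (List.cons true))

/-- The length of the maximal L-path starting at the root, i.e. the length of the
leftmost path of the tree. -/
def leftLen : BinTree → ℕ
  | leaf => 0
  | node l _ => leftLen l + 1

/-- `p` is (the path from the root to) an *initial vertex* of `t`: it is a vertex of `t`
which is not the left child of its father (it is the root or a right child), so it is the
starting vertex of a maximal L-path. -/
def IsInitial (t : BinTree) (p : List Bool) : Prop :=
  (subtreeAt t p).isSome ∧ (p = [] ∨ p.getLast? = some true)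

/-- The length `l(v)` of the associated maximal L-path of the vertex `v` at path `p`
(junk value `0` if `p` is not a vertex of `t`). -/
def pathLen (t : BinTree) (p : List Bool) : ℕ :=
  match subtreeAt t p with
  | some s => leftLen s
  | none => 0

end BinTree

/-- A colored binary tree: a complete binary tree together with an assignment of a color
`c(v)` with `0 ≤ c(v) ≤ ⌊l(v)/2⌋` to each initial vertex `v` (vertices which are not
initial carry the junk color `0`). -/
structure ColoredBinTree : Type where
  /-- the underlying complete binary tree -/
  tree : BinTree
  /-- the color of each vertex (indexed by the path from the root) -/
  color : List Bool → ℕ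
  color_le : ∀ p, BinTree.IsInitial tree p → color p ≤ BinTree.pathLen tree p / 2
  color_eq_zero : ∀ p, ¬ BinTree.IsInitial tree p → color p = 0

namespace ColoredBinTree

/-- The color number of a colored binary tree: the sum of the colors of its
initial vertices. -/
def colorNum (B : ColoredBinTree) : ℕ :=
  ((B.tree.vertices).map B.color).sum

/-- The initial vertex at path `p` is *proper*: its color is `2k` and the length of its
associated maximal L-path is `4k` or `4k+1` for some nonnegative integer `k`. -/
def ProperAt (B : ColoredBinTree) (p : List Bool) : Prop :=
  ∃ k : ℕ, B.color p = 2 * k ∧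
    (BinTree.pathLen B.tree p = 4 * k ∨ BinTree.pathLen B.tree p = 4 * k + 1)

/-- A colored binary tree is *proper* if all its initial vertices are proper. -/
def Proper (B : ColoredBinTree) : Prop :=
  ∀ p, BinTree.IsInitial B.tree p → B.ProperAt p

end ColoredBinTree

/-!
An initial vertex with path length `l` and color `c ≤ ⌊l/2⌋` is proper exactly when `c` is even
and `c = ⌊l/2⌋`. So at an improper vertex the color can be moved between `2j` and `2j + 1`
without leaving `[0, ⌊l/2⌋]`, and the vertex stays improper. Doing this at the first improper
initial vertex (in a fixed order of the vertices) leaves the set of improper vertices unchanged,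
hence is an involution on improper trees, and it changes the color number by one. Proper trees
have even color number, so in `|ECB_n| - |OCB_n|` the improper trees cancel in pairs.
-/

namespace Nat

def flipLowBit (c : ℕ) : ℕ := if Even c then c + 1 else c - 1

theorem flipLowBit_flipLowBit (c : ℕ) : flipLowBit (flipLowBit c) = c := by
  obtain ⟨k, rfl | rfl⟩ := Nat.even_or_odd' c <;> simp [flipLowBit]

theorem flipLowBit_eq_add_one_or (c : ℕ) : flipLowBit c = c + 1 ∨ c = flipLowBit c + 1 := by
  obtain ⟨k, rfl | rfl⟩ := Nat.even_or_odd' c <;> simp [flipLowBit]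

theorem flipLowBit_le {c m : ℕ} (hc : c ≤ m) (h : ¬ (Even c ∧ c = m)) : flipLowBit c ≤ m := by
  unfold flipLowBit
  split_ifs with he
  · exact lt_of_le_of_ne hc fun e => h ⟨he, e⟩
  · omega

theorem not_even_and_flipLowBit_eq {c m : ℕ} (hc : c ≤ m) :
    ¬ (Even (flipLowBit c) ∧ flipLowBit c = m) := by
  obtain ⟨k, rfl | rfl⟩ := Nat.even_or_odd' c
  · simp [flipLowBit]
  · simp [flipLowBit]; omega

end Nat

theorem List.finite_setOf_length_eq_and_forall_le (m n : ℕ) :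
    {l : List ℕ | l.length = m ∧ ∀ x ∈ l, x ≤ n}.Finite := by
  refine ((List.finite_length_eq (Fin (n + 1)) m).image (List.map Fin.val)).subset ?_
  rintro l ⟨hl, hle⟩
  exact ⟨l.pmap (fun x hx => ⟨x, Nat.lt_succ_of_le hx⟩) hle, by simpa using hl,
    by simp [List.map_pmap]⟩

namespace BinTree

theorem mem_vertices {t : BinTree} {p : List Bool} :
    p ∈ t.vertices ↔ (t.subtreeAt p).isSome := by
  induction t generalizing p with
  | leaf => cases p <;> simp [vertices, subtreeAt]
  | node l r ihl ihr =>
    rcases p with _ | ⟨_ | _, q⟩ <;> simp [vertices, subtreeAt, ihl, ihr]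

theorem nodup_vertices (t : BinTree) : t.vertices.Nodup := by
  induction t with
  | leaf => simp [vertices]
  | node l r ihl ihr =>
    refine List.nodup_cons.mpr ⟨by simp, ?_⟩
    refine (ihl.map List.cons_injective).append (ihr.map List.cons_injective) ?_
    simp [List.disjoint_left]

theorem length_vertices (t : BinTree) : t.vertices.length = 2 * t.internals + 1 := by
  induction t with
  | leaf => rfl
  | node l r ihl ihr => simp [vertices, internals, ihl, ihr]; ring

theorem leftLen_le_internals (t : BinTree) : t.leftLen ≤ t.internals := by
  induction t with
  | leaf => rfl
  | node l r ihl ihr => simp only [leftLen, internals]; omega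

theorem internals_le_of_subtreeAt_eq_some {t s : BinTree} {p : List Bool}
    (h : t.subtreeAt p = some s) : s.internals ≤ t.internals := by
  induction p generalizing t with
  | nil => simp_all [subtreeAt]
  | cons b q ih =>
    rcases t with _ | ⟨l, r⟩
    · simp [subtreeAt] at h
    · cases b <;> have := ih h <;> simp only [internals] <;> omega

theorem pathLen_le_internals (t : BinTree) (p : List Bool) : t.pathLen p ≤ t.internals := by
  unfold pathLen
  split
  · exact (leftLen_le_internals _).trans (internals_le_of_subtreeAt_eq_some ‹_›)
  · exact Nat.zero_le _

def toBinaryTree : BinTree → BinaryTree Unit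
  | leaf => .nil
  | node l r => .node () l.toBinaryTree r.toBinaryTree

theorem toBinaryTree_injective : Function.Injective toBinaryTree := by
  intro t₁ t₂ h
  induction t₁ generalizing t₂ with
  | leaf => cases t₂ <;> simp_all [toBinaryTree]
  | node l r ihl ihr =>
    cases t₂ with
    | leaf => simp [toBinaryTree] at h
    | node l' r' =>
      simp only [toBinaryTree, BinaryTree.node.injEq, true_and] at h
      rw [ihl h.1, ihr h.2]

theorem numNodes_toBinaryTree (t : BinTree) : t.toBinaryTree.numNodes = t.internals := by
  induction t with
  | leaf => rfl
  | node l r ihl ihr => simp [toBinaryTree, BinaryTree.numNodes, internals, ihl, ihr]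

theorem finite_setOf_internals_eq (n : ℕ) : {t : BinTree | t.internals = n}.Finite := by
  refine ((BinaryTree.treesOfNumNodesEq n).finite_toSet.preimage
    toBinaryTree_injective.injOn).subset fun t ht => ?_
  simpa [numNodes_toBinaryTree] using ht

end BinTree

namespace ColoredBinTree

open BinTree Nat

@[ext]
theorem ext {B₁ B₂ : ColoredBinTree} (htree : B₁.tree = B₂.tree) (hcolor : B₁.color = B₂.color) :
    B₁ = B₂ := by
  cases B₁; cases B₂; cases htree; cases hcolor; rfl

theorem color_le_internals (B : ColoredBinTree) (p : List Bool) :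
    B.color p ≤ B.tree.internals := by
  by_cases hp : B.tree.IsInitial p
  · exact (B.color_le p hp).trans <| (Nat.div_le_self _ _).trans (pathLen_le_internals _ _)
  · simp [B.color_eq_zero p hp]

theorem color_eq_zero_of_notMem_vertices (B : ColoredBinTree) {p : List Bool}
    (hp : p ∉ B.tree.vertices) : B.color p = 0 :=
  B.color_eq_zero p fun hi => hp (mem_vertices.mpr hi.1)

theorem finite_setOf_internals_eq (n : ℕ) :
    {B : ColoredBinTree | B.tree.internals = n}.Finite := by
  let code (B : ColoredBinTree) : BinTree × List ℕ := (B.tree, B.tree.vertices.map B.color)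
  have hcode : Function.Injective code := by
    intro B₁ B₂ h
    obtain ⟨htree, hcolors⟩ := Prod.mk.inj h
    refine ext htree (funext fun p => ?_)
    rw [← htree] at hcolors
    by_cases hp : p ∈ B₁.tree.vertices
    · exact List.map_inj_left.mp hcolors p hp
    · rw [color_eq_zero_of_notMem_vertices _ hp, color_eq_zero_of_notMem_vertices _ (htree ▸ hp)]
  refine (((BinTree.finite_setOf_internals_eq n).prod
    (List.finite_setOf_length_eq_and_forall_le (2 * n + 1) n)).preimage hcode.injOn).subset ?_
  rintro B rfl
  refine ⟨rfl, by simp [code, length_vertices], ?_⟩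
  simp only [code, List.mem_map]
  rintro _ ⟨p, -, rfl⟩
  exact B.color_le_internals p

variable {B : ColoredBinTree} {p q : List Bool}

theorem properAt_iff : B.ProperAt p ↔ Even (B.color p) ∧ B.color p = B.tree.pathLen p / 2 := by
  constructor
  · rintro ⟨k, hk, hlen | hlen⟩ <;> exact ⟨⟨k, by omega⟩, by omega⟩
  · rintro ⟨⟨k, hk⟩, hlen⟩
    exact ⟨k, by omega, by omega⟩

def ImproperAt (B : ColoredBinTree) (p : List Bool) : Prop :=
  B.tree.IsInitial p ∧ ¬ B.ProperAt p

theorem proper_iff_forall_not_improperAt : B.Proper ↔ ∀ p, ¬ B.ImproperAt p := by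
  simp only [Proper, ImproperAt, not_and, not_not]

def flipAt (B : ColoredBinTree) (p : List Bool) (hp : B.ImproperAt p) : ColoredBinTree where
  tree := B.tree
  color := Function.update B.color p (flipLowBit (B.color p))
  color_le q hq := by
    rcases eq_or_ne q p with rfl | hqp
    · simpa using flipLowBit_le (B.color_le q hq) (properAt_iff.not.mp hp.2)
    · simpa [hqp] using B.color_le q hq
  color_eq_zero q hq := by
    have hqp : q ≠ p := by rintro rfl; exact hq hp.1
    simpa [hqp] using B.color_eq_zero q hq

@[simp]
theorem tree_flipAt (hp : B.ImproperAt p) : (B.flipAt p hp).tree = B.tree := rfl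

@[simp]
theorem color_flipAt (hp : B.ImproperAt p) :
    (B.flipAt p hp).color = Function.update B.color p (flipLowBit (B.color p)) := rfl

theorem improperAt_flipAt_iff (hp : B.ImproperAt p) :
    (B.flipAt p hp).ImproperAt q ↔ B.ImproperAt q := by
  rcases eq_or_ne q p with rfl | hqp
  · refine iff_of_true ⟨hp.1, ?_⟩ hp
    simpa [properAt_iff] using not_even_and_flipLowBit_eq (B.color_le q hp.1)
  · simp [ImproperAt, ProperAt, hqp]

theorem flipAt_flipAt (hp : B.ImproperAt p) (hp' : (B.flipAt p hp).ImproperAt p) :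
    (B.flipAt p hp).flipAt p hp' = B := by
  ext1 <;> simp [flipLowBit_flipLowBit]

theorem colorNum_eq_sum (B : ColoredBinTree) :
    B.colorNum = ∑ q ∈ B.tree.vertices.toFinset, B.color q :=
  (List.sum_toFinset _ (nodup_vertices _)).symm

theorem colorNum_flipAt (hp : B.ImproperAt p) :
    (B.flipAt p hp).colorNum + B.color p = B.colorNum + flipLowBit (B.color p) := by
  have hmem : p ∈ B.tree.vertices.toFinset := List.mem_toFinset.mpr (mem_vertices.mpr hp.1.1)
  rw [colorNum_eq_sum, colorNum_eq_sum, tree_flipAt, color_flipAt, Finset.sum_update_of_mem hmem,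
    Finset.sum_eq_add_sum_sdiff_singleton_of_mem hmem]
  ring

open Classical in
noncomputable def firstImproper (B : ColoredBinTree) : Option (List Bool) :=
  B.tree.vertices.find? fun q => B.ImproperAt q

theorem improperAt_of_firstImproper_eq_some (h : B.firstImproper = some p) : B.ImproperAt p := by
  simpa using List.find?_some h

theorem firstImproper_eq_none_iff : B.firstImproper = none ↔ B.Proper := by
  simp only [firstImproper, List.find?_eq_none, decide_eq_true_eq,
    proper_iff_forall_not_improperAt]
  exact ⟨fun h q hq => h q (mem_vertices.mpr hq.1.1) hq, fun h q _ => h q⟩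

theorem firstImproper_congr {B' : ColoredBinTree} (htree : B'.tree = B.tree)
    (h : ∀ q, B'.ImproperAt q ↔ B.ImproperAt q) : B'.firstImproper = B.firstImproper := by
  simp only [firstImproper, htree]
  congr 1
  ext q
  simp [h]

noncomputable def flipFirstImproper (B : ColoredBinTree) : ColoredBinTree :=
  match h : B.firstImproper with
  | none => B
  | some p => B.flipAt p (improperAt_of_firstImproper_eq_some h)

theorem flipFirstImproper_of_eq_none (h : B.firstImproper = none) : B.flipFirstImproper = B := by
  unfold flipFirstImproper
  split
  next => rfl
  next hsome => simp [h] at hsome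

theorem flipFirstImproper_of_eq_some (h : B.firstImproper = some p) :
    B.flipFirstImproper = B.flipAt p (improperAt_of_firstImproper_eq_some h) := by
  unfold flipFirstImproper
  split
  next hnone => simp [h] at hnone
  next hsome => cases h.symm.trans hsome; rfl

theorem tree_flipFirstImproper (B : ColoredBinTree) : B.flipFirstImproper.tree = B.tree := by
  unfold flipFirstImproper
  split <;> rfl

theorem improperAt_flipFirstImproper_iff (q : List Bool) :
    B.flipFirstImproper.ImproperAt q ↔ B.ImproperAt q := by
  unfold flipFirstImproper
  split
  · rfl
  · exact improperAt_flipAt_iff _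

theorem firstImproper_flipFirstImproper : B.flipFirstImproper.firstImproper = B.firstImproper :=
  firstImproper_congr (tree_flipFirstImproper B) improperAt_flipFirstImproper_iff

theorem proper_flipFirstImproper_iff : B.flipFirstImproper.Proper ↔ B.Proper := by
  rw [← firstImproper_eq_none_iff, ← firstImproper_eq_none_iff, firstImproper_flipFirstImproper]

theorem flipFirstImproper_involutive : Function.Involutive flipFirstImproper := by
  intro B
  cases h : B.firstImproper with
  | none => rw [flipFirstImproper_of_eq_none h, flipFirstImproper_of_eq_none h]
  | some p =>
    have h' := firstImproper_flipFirstImproper.trans h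
    rw [flipFirstImproper_of_eq_some h']
    simp_rw [flipFirstImproper_of_eq_some h]
    exact flipAt_flipAt _ _

theorem colorNum_flipFirstImproper (hB : ¬ B.Proper) :
    B.flipFirstImproper.colorNum = B.colorNum + 1 ∨
      B.colorNum = B.flipFirstImproper.colorNum + 1 := by
  obtain ⟨p, h⟩ := Option.ne_none_iff_exists'.mp (firstImproper_eq_none_iff.not.mpr hB)
  have hsum := colorNum_flipAt (improperAt_of_firstImproper_eq_some h)
  rw [← flipFirstImproper_of_eq_some h] at hsum
  rcases flipLowBit_eq_add_one_or (B.color p) with hc | hc <;> omega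

theorem even_colorNum_of_proper (hB : B.Proper) : Even B.colorNum := by
  rw [colorNum_eq_sum]
  refine Finset.even_sum _ fun q _ => ?_
  by_cases hq : B.tree.IsInitial q
  · exact (properAt_iff.mp (hB q hq)).1
  · simp [B.color_eq_zero q hq]

end ColoredBinTree

theorem card_even_sub_card_odd_eq_card_of_involutive {α : Type*} {Q P : α → Prop} {w : α → ℕ}
    (hQ : {x | Q x}.Finite) {φ : α → α} (hφ : Function.Involutive φ)
    (hQφ : ∀ x, Q (φ x) ↔ Q x) (hPφ : ∀ x, P (φ x) ↔ P x)
    (hwφ : ∀ x, ¬ P x → (Even (w (φ x)) ↔ ¬ Even (w x))) (hP : ∀ x, P x → Even (w x)) :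
    (Nat.card {x // Q x ∧ Even (w x)} : ℤ) - Nat.card {x // Q x ∧ Odd (w x)} =
      Nat.card {x // Q x ∧ P x} := by
  have hodd : Nat.card {x // Q x ∧ Odd (w x)} = Nat.card {x // Q x ∧ ¬ P x ∧ Even (w x)} := by
    refine Nat.card_congr (hφ.toPerm.subtypeEquiv fun x => ?_)
    by_cases hx : P x
    · simp [hx, hP x hx, hPφ]
    · simp [hx, hQφ, hPφ, hwφ x hx, Nat.not_even_iff_odd]
  have heven : Nat.card {x // Q x ∧ Even (w x)} =
      Nat.card {x // Q x ∧ P x} + Nat.card {x // Q x ∧ ¬ P x ∧ Even (w x)} := by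
    have hsplit : {x | Q x ∧ Even (w x)} = {x | Q x ∧ P x} ∪ {x | Q x ∧ ¬ P x ∧ Even (w x)} := by
      ext x
      by_cases hx : P x <;> simp [hx, hP]
    have hdisj : Disjoint {x | Q x ∧ P x} {x | Q x ∧ ¬ P x ∧ Even (w x)} :=
      Set.disjoint_left.mpr fun x hx hx' => hx'.2.1 hx.2
    have hunion :=
      Set.ncard_union_eq hdisj (hQ.subset fun x hx => hx.1) (hQ.subset fun x hx => hx.1)
    rw [← hsplit, ← Nat.card_coe_set_eq, ← Nat.card_coe_set_eq, ← Nat.card_coe_set_eq] at hunion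
    exact hunion
  rw [heven, hodd]
  push_cast
  ring

/-- **A parity-reversing involution on improper colored binary trees** (Theorem 1).
For every nonnegative integer `n` there is an involution `φ` on the set of improper
colored binary trees with `n` internal vertices which changes the color number by exactly
`1` (hence reverses its parity); consequently `|ECB_n| - |OCB_n| = |CB'_n|`, where
`ECB_n` (resp. `OCB_n`) is the set of colored binary trees with `n` internal vertices
with even (resp. odd) color number, and `CB'_n` is the set of proper colored binary trees
with `n` internal vertices. -/
theorem parity_reversing_involution (n : ℕ) :
    (∃ φ : {B : ColoredBinTree // B.tree.internals = n ∧ ¬ B.Proper} →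
        {B : ColoredBinTree // B.tree.internals = n ∧ ¬ B.Proper},
      Function.Involutive φ ∧
        ∀ B, (φ B).1.colorNum = B.1.colorNum + 1 ∨ B.1.colorNum = (φ B).1.colorNum + 1) ∧
    (Nat.card {B : ColoredBinTree // B.tree.internals = n ∧ Even B.colorNum} : ℤ) -
        (Nat.card {B : ColoredBinTree // B.tree.internals = n ∧ Odd B.colorNum} : ℤ) =
      Nat.card {B : ColoredBinTree // B.tree.internals = n ∧ B.Proper} := by
  have hφ := ColoredBinTree.flipFirstImproper_involutive
  have htree (B : ColoredBinTree) : B.flipFirstImproper.tree.internals = B.tree.internals := by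
    rw [B.tree_flipFirstImproper]
  refine ⟨⟨fun B => ⟨B.1.flipFirstImproper, (htree B.1).trans B.2.1,
      ColoredBinTree.proper_flipFirstImproper_iff.not.mpr B.2.2⟩,
    fun B => Subtype.ext (hφ B.1), fun B => ColoredBinTree.colorNum_flipFirstImproper B.2.2⟩, ?_⟩
  refine card_even_sub_card_odd_eq_card_of_involutive
    (ColoredBinTree.finite_setOf_internals_eq n) hφ (fun B => by rw [htree])
    (fun B => ColoredBinTree.proper_flipFirstImproper_iff) (fun B hB => ?_)
    (fun B => ColoredBinTree.even_colorNum_of_proper)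
  rcases ColoredBinTree.colorNum_flipFirstImproper hB with h | h <;> simp [h, Nat.even_add_one]
end

section
/- For every nonnegative integer n, there is a bijection between T_n, the set of colored 5-ary trees of total weight n, and CB'_n, the set of proper colored binary trees with n internal vertices; in particular |T_n| = |CB'_n|. -/
/-- A complete 5-ary tree: every internal vertex has exactly 5 (ordered) children. -/
inductive FiveTree : Type
  | leaf : FiveTree
  | node : FiveTree → FiveTree → FiveTree → FiveTree → FiveTree → FiveTree

namespace FiveTree

/-- The number of internal vertices of a complete 5-ary tree. -/
def internals : FiveTree → ℕ
  | leaf => 0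
  | node a b c d e =>
      internals a + internals b + internals c + internals d + internals e + 1

/-- The subtree rooted at the vertex reached from the root by the given path of child
indices; `none` if there is no such vertex. -/
def subtreeAt : FiveTree → List (Fin 5) → Option FiveTree
  | t, [] => some t
  | leaf, _ :: _ => none
  | node a _ _ _ _, ⟨0, _⟩ :: p => subtreeAt a p
  | node _ b _ _ _, ⟨1, _⟩ :: p => subtreeAt b p
  | node _ _ c _ _, ⟨2, _⟩ :: p => subtreeAt c p
  | node _ _ _ d _, ⟨3, _⟩ :: p => subtreeAt d p
  | node _ _ _ _ e, ⟨_ + 4, _⟩ :: p => subtreeAt e p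

/-- The list of (the paths from the root to) all vertices of a complete 5-ary tree. -/
def vertices : FiveTree → List (List (Fin 5))
  | leaf => [[]]
  | node a b c d e =>
      [] :: ((vertices a).map (List.cons 0) ++ (vertices b).map (List.cons 1) ++
        (vertices c).map (List.cons 2) ++ (vertices d).map (List.cons 3) ++
        (vertices e).map (List.cons 4))

end FiveTree

/-- A colored 5-ary tree: a complete 5-ary tree in which every vertex (internal or leaf)
is assigned a nonnegative integer color (non-vertex paths carry the junk color `0`). -/
structure ColoredFiveTree : Type where
  /-- the underlying complete 5-ary tree -/
  tree : FiveTree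
  /-- the color of each vertex (indexed by the path from the root) -/
  color : List (Fin 5) → ℕ
  color_eq_zero : ∀ p, ¬ (FiveTree.subtreeAt tree p).isSome → color p = 0

namespace ColoredFiveTree

/-- The sum of the colors of all vertices of a colored 5-ary tree. -/
def colorSum (T : ColoredFiveTree) : ℕ :=
  ((T.tree.vertices).map T.color).sum

/-- A colored 5-ary tree with `p` internal vertices has weight `n` iff its colors sum to
`n - 4p`; equivalently, its weight is `(sum of colors) + 4 · (number of internal vertices)`. -/
def weight (T : ColoredFiveTree) : ℕ :=
  T.colorSum + 4 * T.tree.internals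

end ColoredFiveTree

/-!
Both families decompose in the same three ways. A colored 5-ary tree is a leaf of color 0, or
arises from another one by raising its root color by one (weight `+1`), or is a root of color 0
with five subtrees (weight `+4`). A proper colored binary tree is determined by its underlying
tree, whose maximal L-paths all have length `≡ 0, 1 (mod 4)`: such a tree is a leaf, or a root
with empty left subtree and a right subtree (one more internal vertex), or its leftmost path has
length at least 4 and it splits into the four right subtrees hanging off the top of that path and
the subtree below it (four more internal vertices). Every step with arguments adds positive
weight, so strong induction on the weight matches the weight-`n` members of the two families.
-/

def Equiv.subtypeSigmaEquivSigmaSubtype {α : Type*} {β : α → Type*} (p : Sigma β → Prop) :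
    {x // p x} ≃ Σ a, {b : β a // p ⟨a, b⟩} where
  toFun x := ⟨x.1.1, x.1.2, x.2⟩
  invFun y := ⟨⟨y.1, y.2.1⟩, y.2.2⟩
  left_inv _ := rfl
  right_inv _ := rfl

section WeightedDecomposition

variable {C : Type*} (arity weight : C → ℕ) {α : Type*} (w : α → ℕ)

def weightEqEquivSigma (e : (Σ c, Fin (arity c) → α) ≃ α)
    (he : ∀ x, w (e x) = weight x.1 + ∑ i, w (x.2 i)) (n : ℕ) :
    {a // w a = n} ≃ Σ c, Σ v : {v : Fin (arity c) → ℕ // weight c + ∑ i, v i = n},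
      ∀ i, {a // w a = v.1 i} :=
  calc {a // w a = n}
      ≃ {x : Σ c, Fin (arity c) → α // weight x.1 + ∑ i, w (x.2 i) = n} :=
        e.symm.subtypeEquiv fun a => by rw [← he, e.apply_symm_apply]
    _ ≃ Σ c, {f : Fin (arity c) → α // weight c + ∑ i, w (f i) = n} :=
        Equiv.subtypeSigmaEquivSigmaSubtype _
    _ ≃ _ := Equiv.sigmaCongrRight fun c =>
        (Equiv.sigmaSubtypeFiberEquivSubtype (fun (f : Fin (arity c) → α) i => w (f i))
          (q := fun v => weight c + ∑ i, v i = n) fun _ => Iff.rfl).symm.trans <|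
          Equiv.sigmaCongrRight fun v =>
            (Equiv.subtypeEquivRight fun _ => funext_iff).trans
              (Equiv.subtypePiEquivPi (p := fun i a => w a = v.1 i))

variable {β : Type*} (w' : β → ℕ)

theorem nonempty_weight_eq_equiv (hpos : ∀ c, 0 < arity c → 0 < weight c)
    (e : (Σ c, Fin (arity c) → α) ≃ α) (he : ∀ x, w (e x) = weight x.1 + ∑ i, w (x.2 i))
    (e' : (Σ c, Fin (arity c) → β) ≃ β)
    (he' : ∀ x, w' (e' x) = weight x.1 + ∑ i, w' (x.2 i))
    (n : ℕ) : Nonempty ({a // w a = n} ≃ {b // w' b = n}) := by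
  induction n using Nat.strong_induction_on with
  | _ n ih =>
    have hlt : ∀ c (v : {v : Fin (arity c) → ℕ // weight c + ∑ i, v i = n}) i, v.1 i < n :=
      fun c v i => by
        have := hpos c i.pos
        have := Finset.single_le_sum (fun j _ => Nat.zero_le (v.1 j)) (Finset.mem_univ i)
        omega
    exact ⟨(weightEqEquivSigma arity weight w e he n).trans <|
      (Equiv.sigmaCongrRight fun c => Equiv.sigmaCongrRight fun v =>
        Equiv.piCongrRight fun i => (ih _ (hlt c v i)).some).trans
      (weightEqEquivSigma arity weight w' e' he' n).symm⟩

end WeightedDecomposition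

/-- The three ways in which a tree of either family is built from smaller ones: a shape of weight
`k` and arity `m` stands for the term `xᵏ Fᵐ` of the functional equation `F = 1 + x F + x⁴ F⁵`
shared by both generating functions. -/
inductive Shape
  | leaf
  | bump
  | node

namespace Shape

abbrev arity : Shape → ℕ
  | leaf => 0
  | bump => 1
  | node => 5

def weight : Shape → ℕ
  | leaf => 0
  | bump => 1
  | node => 4

theorem weight_pos_of_arity_pos : ∀ s : Shape, 0 < s.arity → 0 < s.weight
  | leaf, h => absurd h (lt_irrefl 0)
  | bump, _ => Nat.one_pos
  | node, _ => Nat.succ_pos 3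

end Shape

attribute [ext] ColoredFiveTree

namespace FiveTree

theorem subtreeAt_nil (t : FiveTree) : subtreeAt t [] = some t := by
  cases t <;> rfl

def ofFn (f : Fin 5 → FiveTree) : FiveTree :=
  node (f 0) (f 1) (f 2) (f 3) (f 4)

theorem ofFn_injective : Function.Injective ofFn := by
  intro f g h
  simp only [ofFn, node.injEq] at h
  funext i
  fin_cases i <;> tauto

theorem subtreeAt_ofFn_cons (f : Fin 5 → FiveTree) (i : Fin 5) (q : List (Fin 5)) :
    subtreeAt (ofFn f) (i :: q) = subtreeAt (f i) q := by
  fin_cases i <;> rfl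

theorem internals_ofFn (f : Fin 5 → FiveTree) :
    (ofFn f).internals = ∑ i, (f i).internals + 1 := by
  simp [ofFn, internals, Fin.sum_univ_five]

theorem sum_map_vertices_ofFn (f : Fin 5 → FiveTree) (g : List (Fin 5) → ℕ) :
    ((ofFn f).vertices.map g).sum =
      g [] + ∑ i, ((f i).vertices.map fun q => g (i :: q)).sum := by
  simp only [ofFn, vertices, List.map_cons, List.map_append, List.map_map, Function.comp_def,
    List.sum_cons, List.sum_append, Fin.sum_univ_five]

theorem sum_map_vertices_update (t : FiveTree) (g : List (Fin 5) → ℕ) (c : ℕ) :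
    (t.vertices.map (Function.update g [] c)).sum + g [] = (t.vertices.map g).sum + c := by
  cases t <;> simp [vertices, Function.comp_def] <;> omega

end FiveTree

namespace ColoredFiveTree

open FiveTree

def leaf : ColoredFiveTree :=
  ⟨.leaf, fun _ => 0, fun _ _ => rfl⟩

def node (f : Fin 5 → ColoredFiveTree) : ColoredFiveTree where
  tree := ofFn fun i => (f i).tree
  color
    | [] => 0
    | i :: q => (f i).color q
  color_eq_zero
    | [], _ => rfl
    | i :: q, h => (f i).color_eq_zero q (by rwa [subtreeAt_ofFn_cons] at h)

theorem node_injective : Function.Injective node := by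
  intro f g h
  funext i
  ext1
  · exact congrFun
      (@ofFn_injective (fun i => (f i).tree) (fun i => (g i).tree) (congrArg tree h)) i
  · funext q
    exact congrFun (congrArg color h) (i :: q)

def withRootColor (T : ColoredFiveTree) (c : ℕ) : ColoredFiveTree where
  tree := T.tree
  color := Function.update T.color [] c
  color_eq_zero p hp := by
    rw [Function.update_of_ne (by rintro rfl; simp [subtreeAt_nil] at hp)]
    exact T.color_eq_zero p hp

theorem withRootColor_withRootColor (T : ColoredFiveTree) (c c' : ℕ) :
    (T.withRootColor c).withRootColor c' = T.withRootColor c' := by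
  ext1
  exacts [rfl, Function.update_idem _ _ _]

@[simp] theorem withRootColor_color_nil (T : ColoredFiveTree) (c : ℕ) :
    (T.withRootColor c).color [] = c :=
  Function.update_self (β := fun _ => ℕ) [] c T.color

theorem withRootColor_self (T : ColoredFiveTree) : T.withRootColor (T.color []) = T := by
  ext1
  exacts [rfl, Function.update_eq_self _ _]

theorem weight_leaf : leaf.weight = 0 := by
  simp [leaf, weight, colorSum, vertices, FiveTree.internals]

theorem weight_node (f : Fin 5 → ColoredFiveTree) :
    (node f).weight = ∑ i, (f i).weight + 4 := by
  simp only [weight, colorSum, node, sum_map_vertices_ofFn, internals_ofFn,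
    Finset.sum_add_distrib, ← Finset.mul_sum]
  ring

theorem weight_withRootColor (T : ColoredFiveTree) (c : ℕ) :
    (T.withRootColor c).weight + T.color [] = T.weight + c := by
  have := sum_map_vertices_update T.tree T.color c
  simp only [weight, colorSum, withRootColor]
  omega

theorem eq_leaf {T : ColoredFiveTree} (hc : T.color [] = 0) (ht : T.tree = .leaf) :
    T = leaf := by
  ext1
  · exact ht
  · funext p
    rcases p with _ | ⟨i, q⟩
    · exact hc
    · exact T.color_eq_zero _ (by simp [ht, subtreeAt])

theorem exists_eq_node {T : ColoredFiveTree} (hc : T.color [] = 0) (ht : T.tree ≠ .leaf) :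
    ∃ f, T = node f := by
  obtain ⟨t, color, hzero⟩ := T
  obtain _ | ⟨a, b, c, d, e⟩ := t
  · exact absurd rfl ht
  refine ⟨fun i => ⟨![a, b, c, d, e] i, fun q => color (i :: q), fun q hq => hzero (i :: q)
    (by rwa [show FiveTree.node a b c d e = ofFn ![a, b, c, d, e] from rfl,
      subtreeAt_ofFn_cons])⟩, ?_⟩
  ext1
  · rfl
  · funext p
    rcases p with _ | ⟨i, q⟩
    exacts [hc, rfl]

def build : (Σ s : Shape, Fin s.arity → ColoredFiveTree) → ColoredFiveTree
  | ⟨.leaf, _⟩ => leaf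
  | ⟨.bump, f⟩ => (f 0).withRootColor ((f 0).color [] + 1)
  | ⟨.node, f⟩ => node f

theorem weight_build (x : Σ s : Shape, Fin s.arity → ColoredFiveTree) :
    (build x).weight = x.1.weight + ∑ i, (x.2 i).weight := by
  obtain ⟨_ | _ | _, f⟩ := x
  · simp [build, weight_leaf, Shape.weight]
  · have := weight_withRootColor (f 0) ((f 0).color [] + 1)
    simp only [build, Shape.weight, Fin.sum_univ_one]
    omega
  · exact (weight_node f).trans (add_comm _ _)

theorem build_injective : Function.Injective build := by
  rintro ⟨_ | _ | _, f⟩ ⟨_ | _ | _, g⟩ h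
  case leaf.leaf => exact congrArg _ (Subsingleton.elim f g)
  case bump.bump =>
    have hc : (f 0).color [] = (g 0).color [] := by
      simpa [build] using congrArg (·.color []) h
    have h₀ := congrArg (·.withRootColor ((f 0).color [])) h
    simp only [build, withRootColor_withRootColor] at h₀
    rw [withRootColor_self, hc, withRootColor_self] at h₀
    exact congrArg _ (funext fun i => Subsingleton.elim i 0 ▸ h₀)
  case node.node => exact congrArg _ (node_injective h)
  -- distinct shapes differ in the root color (zero or not) or in the tree (leaf or not)
  all_goals
    have hc := congrArg (·.color []) h
    have ht := congrArg (·.tree) h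
    simp [build, leaf, node, withRootColor, ofFn] at hc ht

theorem build_surjective : Function.Surjective build := by
  intro T
  rcases hc : T.color [] with _ | c
  · by_cases ht : T.tree = .leaf
    · exact ⟨⟨.leaf, Fin.elim0⟩, (eq_leaf hc ht).symm⟩
    · obtain ⟨f, rfl⟩ := exists_eq_node hc ht
      exact ⟨⟨.node, f⟩, rfl⟩
  · refine ⟨⟨.bump, fun _ => T.withRootColor c⟩, ?_⟩
    simp only [build, withRootColor_withRootColor, withRootColor_color_nil, ← hc,
      withRootColor_self]

noncomputable def buildEquiv :
    (Σ s : Shape, Fin s.arity → ColoredFiveTree) ≃ ColoredFiveTree :=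
  Equiv.ofBijective build ⟨build_injective, build_surjective⟩

end ColoredFiveTree

namespace BinTree

theorem subtreeAt_nil (t : BinTree) : subtreeAt t [] = some t := by
  cases t <;> rfl

theorem isInitial_nil (t : BinTree) : IsInitial t [] :=
  ⟨by rw [subtreeAt_nil]; rfl, Or.inl rfl⟩

theorem pathLen_nil (t : BinTree) : pathLen t [] = leftLen t := by
  simp only [pathLen, subtreeAt_nil]

theorem not_isInitial_leaf_cons (b : Bool) (p : List Bool) : ¬ IsInitial leaf (b :: p) := by
  simp [IsInitial, subtreeAt]

theorem isInitial_node_true_cons {l r : BinTree} {p : List Bool} :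
    IsInitial (node l r) (true :: p) ↔ IsInitial r p := by
  cases p <;> simp [IsInitial, subtreeAt, subtreeAt_nil]

theorem isInitial_node_false_cons {l r : BinTree} {p : List Bool} :
    IsInitial (node l r) (false :: p) ↔ p ≠ [] ∧ IsInitial l p := by
  cases p <;> simp [IsInitial, subtreeAt]

/-- `Q` holds for the length of every maximal L-path that starts at a right child. -/
def ForallRightSpines (Q : ℕ → Prop) : BinTree → Prop
  | leaf => True
  | node l r => ForallRightSpines Q l ∧ Q r.leftLen ∧ ForallRightSpines Q r

theorem forall_isInitial_ne_nil_iff (Q : ℕ → Prop) :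
    ∀ t : BinTree, (∀ p ≠ [], IsInitial t p → Q (pathLen t p)) ↔ ForallRightSpines Q t
  | leaf => by
    refine iff_of_true ?_ trivial
    rintro (_ | ⟨b, p⟩) hp hi
    exacts [absurd rfl hp, absurd hi (not_isInitial_leaf_cons b p)]
  | node l r => by
    rw [ForallRightSpines, ← forall_isInitial_ne_nil_iff Q l,
      ← forall_isInitial_ne_nil_iff Q r, ← pathLen_nil]
    constructor
    · intro h
      exact ⟨fun p hp hi => h (false :: p) (List.cons_ne_nil _ _)
          (isInitial_node_false_cons.2 ⟨hp, hi⟩),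
        h [true] (List.cons_ne_nil _ _) (isInitial_node_true_cons.2 (isInitial_nil r)),
        fun p _ hi => h (true :: p) (List.cons_ne_nil _ _) (isInitial_node_true_cons.2 hi)⟩
    · rintro ⟨hl, hr₀, hr⟩ (_ | ⟨_ | _, p⟩) hp hi
      · exact absurd rfl hp
      · exact hl p (isInitial_node_false_cons.1 hi).1 (isInitial_node_false_cons.1 hi).2
      · rcases eq_or_ne p [] with rfl | hp
        exacts [hr₀, hr p hp (isInitial_node_true_cons.1 hi)]

theorem forall_isInitial_iff (Q : ℕ → Prop) (t : BinTree) :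
    (∀ p, IsInitial t p → Q (pathLen t p)) ↔ Q t.leftLen ∧ ForallRightSpines Q t := by
  rw [← forall_isInitial_ne_nil_iff, ← pathLen_nil]
  constructor
  · exact fun h => ⟨h [] (isInitial_nil t), fun p _ => h p⟩
  · rintro ⟨h₀, h⟩ p hi
    rcases eq_or_ne p [] with rfl | hp
    exacts [h₀, h p hp hi]

/-- Every maximal L-path of `t` has length `4k` or `4k + 1`. -/
def IsProperShape (t : BinTree) : Prop :=
  t.leftLen % 4 ≤ 1 ∧ ForallRightSpines (· % 4 ≤ 1) t

open Classical in
/-- The coloring that properness forces on `t`. -/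
noncomputable def properColoring (t : BinTree) : ColoredBinTree where
  tree := t
  color p := if IsInitial t p then 2 * (pathLen t p / 4) else 0
  color_le p hp := by rw [if_pos hp]; omega
  color_eq_zero _ hp := if_neg hp

end BinTree

namespace ColoredBinTree

open BinTree

theorem properAt_iff_s3 (B : ColoredBinTree) (p : List Bool) :
    B.ProperAt p ↔ B.color p = 2 * (pathLen B.tree p / 4) ∧ pathLen B.tree p % 4 ≤ 1 := by
  constructor
  · rintro ⟨k, hc, hl | hl⟩ <;> omega
  · rintro ⟨hc, hl⟩
    exact ⟨_, hc, by omega⟩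

theorem Proper.isProperShape {B : ColoredBinTree} (h : B.Proper) : B.tree.IsProperShape :=
  (forall_isInitial_iff (· % 4 ≤ 1) _).1 fun p hp => ((B.properAt_iff_s3 p).1 (h p hp)).2

theorem Proper.properColoring_tree {B : ColoredBinTree} (h : B.Proper) :
    B.tree.properColoring = B := by
  obtain ⟨t, c, hle, hzero⟩ := B
  simp only [properColoring, mk.injEq, true_and]
  funext p
  split_ifs with hp
  exacts [((properAt_iff_s3 _ p).1 (h p hp)).1.symm, (hzero p hp).symm]

theorem proper_properColoring {t : BinTree} (h : t.IsProperShape) : t.properColoring.Proper :=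
  fun p hp => (properAt_iff_s3 _ p).2
    ⟨if_pos hp, (forall_isInitial_iff (· % 4 ≤ 1) t).2 h p hp⟩

noncomputable def properEquiv :
    {B : ColoredBinTree // B.Proper} ≃ {t : BinTree // t.IsProperShape} where
  toFun B := ⟨B.1.tree, B.2.isProperShape⟩
  invFun t := ⟨t.1.properColoring, proper_properColoring t.2⟩
  left_inv B := Subtype.ext B.2.properColoring_tree
  right_inv _ := rfl

noncomputable def internalsEqProperEquiv (n : ℕ) :
    {t : {t : BinTree // t.IsProperShape} // t.1.internals = n} ≃
      {B : ColoredBinTree // B.tree.internals = n ∧ B.Proper} :=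
  (properEquiv.symm.subtypeEquiv fun _ => Iff.rfl).trans <|
    (Equiv.subtypeSubtypeEquivSubtypeInter _ fun B => B.tree.internals = n).trans
      (Equiv.subtypeEquivRight fun _ => and_comm)

end ColoredBinTree

namespace BinTree

def build : (Σ s : Shape, Fin s.arity → BinTree) → BinTree
  | ⟨.leaf, _⟩ => leaf
  | ⟨.bump, f⟩ => node leaf (f 0)
  | ⟨.node, f⟩ => node (node (node (node (f 4) (f 3)) (f 2)) (f 1)) (f 0)

theorem internals_build (x : Σ s : Shape, Fin s.arity → BinTree) :
    (build x).internals = x.1.weight + ∑ i, (x.2 i).internals := by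
  obtain ⟨_ | _ | _, f⟩ := x <;>
    simp [build, internals, Shape.weight, Fin.sum_univ_five] <;> omega

theorem isProperShape_build (x : Σ s : Shape, Fin s.arity → BinTree)
    (h : ∀ i, (x.2 i).IsProperShape) : (build x).IsProperShape := by
  obtain ⟨_ | _ | _, f⟩ := x
  · exact ⟨Nat.zero_le 1, trivial⟩
  · exact ⟨Nat.le_refl 1, trivial, h 0⟩
  · obtain ⟨h₄, h₄'⟩ := h 4
    refine ⟨?_, ⟨⟨⟨h₄', h 3⟩, h 2⟩, h 1⟩, h 0⟩
    simp only [build, leftLen] at h₄ ⊢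
    omega

theorem build_injective : Function.Injective build := by
  rintro ⟨_ | _ | _, f⟩ ⟨_ | _ | _, g⟩ h <;>
    simp only [build, node.injEq, reduceCtorEq, false_and] at h
  · exact congrArg _ (Subsingleton.elim f g)
  · exact congrArg _ (funext fun i => by fin_cases i; exact h.2)
  · obtain ⟨⟨⟨⟨h₄, h₃⟩, h₂⟩, h₁⟩, h₀⟩ := h
    exact congrArg _ (funext fun i => by fin_cases i <;> assumption)

theorem exists_build_of_isProperShape :
    ∀ t : BinTree, t.IsProperShape →
      ∃ x : Σ s : Shape, Fin s.arity → {t : BinTree // t.IsProperShape},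
        build ⟨x.1, fun i => (x.2 i).1⟩ = t
  | leaf, _ => ⟨⟨.leaf, Fin.elim0⟩, rfl⟩
  | node leaf r, ⟨_, _, hr⟩ => ⟨⟨.bump, fun _ => ⟨r, hr⟩⟩, rfl⟩
  | node (node leaf _) _, ⟨h, _⟩ => by simp [leftLen] at h
  | node (node (node leaf _) _) _, ⟨h, _⟩ => by simp [leftLen] at h
  | node (node (node (node l r₃) r₂) r₁) r₀, ⟨h, ⟨⟨⟨hl, hr₃⟩, hr₂⟩, hr₁⟩, hr₀⟩ =>
    have hl₀ : l.leftLen % 4 ≤ 1 := by simp only [leftLen] at h; omega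
    ⟨⟨.node, ![⟨r₀, hr₀⟩, ⟨r₁, hr₁⟩, ⟨r₂, hr₂⟩, ⟨r₃, hr₃⟩, ⟨l, hl₀, hl⟩]⟩, rfl⟩

noncomputable def buildProperShapeEquiv :
    (Σ s : Shape, Fin s.arity → {t : BinTree // t.IsProperShape}) ≃
      {t : BinTree // t.IsProperShape} :=
  Equiv.ofBijective
    (fun x => ⟨build ⟨x.1, fun i => (x.2 i).1⟩,
      isProperShape_build ⟨x.1, fun i => (x.2 i).1⟩ fun i => (x.2 i).2⟩)
    ⟨fun x y h => by
      obtain ⟨s, f⟩ := x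
      obtain ⟨s', g⟩ := y
      obtain ⟨rfl, hfg⟩ := Sigma.mk.inj_iff.1 (build_injective (Subtype.ext_iff.1 h))
      exact congrArg _ (funext fun i => Subtype.ext (congrFun (eq_of_heq hfg) i)),
    fun t => (exists_build_of_isProperShape t.1 t.2).imp fun _ => Subtype.ext⟩

end BinTree

/-- **The bijection between colored 5-ary trees and proper colored binary trees**
(Theorem 2). For every nonnegative integer `n` there is a bijection between `T_n`, the
set of colored 5-ary trees of total weight `n`, and `CB'_n`, the set of proper colored
binary trees with `n` internal vertices; in particular `|T_n| = |CB'_n|`. -/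
theorem colored_five_ary_equiv_proper_binary (n : ℕ) :
    Nonempty ({T : ColoredFiveTree // T.weight = n} ≃
        {B : ColoredBinTree // B.tree.internals = n ∧ B.Proper}) ∧
      Nat.card {T : ColoredFiveTree // T.weight = n} =
        Nat.card {B : ColoredBinTree // B.tree.internals = n ∧ B.Proper} := by
  obtain ⟨e⟩ := nonempty_weight_eq_equiv Shape.arity Shape.weight ColoredFiveTree.weight
    (fun t : {t : BinTree // t.IsProperShape} => t.1.internals) Shape.weight_pos_of_arity_pos
    ColoredFiveTree.buildEquiv ColoredFiveTree.weight_build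
    BinTree.buildProperShapeEquiv (fun x => BinTree.internals_build _) n
  let e' := e.trans (ColoredBinTree.internalsEqProperEquiv n)
  exact ⟨⟨e'⟩, Nat.card_congr e'⟩
end

section
/- For all nonnegative integers n and p with 0 ≤ p ≤ \lfloor n/2 \rfloor, the number f_{n,p} of colored binary trees with n internal vertices and color number p equals (1/(n+1)) \binom{n+p}{p} \binom{2n-2p}{n-2p}. -/
namespace List

theorem natCard_length_sum_eq (k m : ℕ) :
    Nat.card {l : List ℕ // l.length = k ∧ l.sum = m} = (k + m - 1).choose m := by
  classical
  have e : {l : List ℕ // l.length = k ∧ l.sum = m} ≃ Sym (Fin k) m :=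
    (Equiv.subtypeSubtypeEquivSubtypeInter (fun l : List ℕ => l.length = k)
      (fun l => l.sum = m)).symm.trans <|
      ((Equiv.vectorEquivFin ℕ k).subtypeEquiv fun v => by
        rw [← sum_ofFn, ← Vector.toList_ofFn]
        exact Iff.of_eq (congrArg (fun v => v.toList.sum = m) (Vector.ofFn_get v).symm)).trans
      (Sym.equivNatSumOfFintype (Fin k) m).symm
  rw [Nat.card_congr e, Sym.natCard_sym_eq_choose, Nat.card_fin]

theorem Nodup.exists_map_eq {α β : Type*} {P : List α} (hP : P.Nodup) {l : List β}
    (hl : l.length = P.length) (b : β) : ∃ f : α → β, P.map f = l ∧ ∀ a ∉ P, f a = b := by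
  classical
  refine ⟨fun a => l.getD (P.idxOf a) b, ext_getElem (by simp [hl]) fun i h₁ h₂ => ?_,
    fun a ha => l.getD_eq_default _ (by rw [hl, idxOf_eq_length ha])⟩
  simp [hP.idxOf_getElem, h₂]

def IsLukasiewicz (w : List ℕ) : Prop :=
  w.sum + 1 = w.length ∧ ∀ j, 0 < j → j < w.length → j ≤ (w.take j).sum

theorem IsLukasiewicz.eq_of_prefix {u u' : List ℕ} (hu : u.IsLukasiewicz)
    (hu' : u'.IsLukasiewicz) (h : u <+: u') : u = u' := by
  have hus := hu.1
  rcases h.length_le.lt_or_eq with hlt | heq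
  · have hle := hu'.2 u.length (by omega) hlt
    rw [← prefix_iff_eq_take.1 h] at hle
    omega
  · exact h.eq_of_length heq

theorem IsLukasiewicz.eq_of_append_eq_append {u u' v v' : List ℕ} (hu : u.IsLukasiewicz)
    (hu' : u'.IsLukasiewicz) (h : u ++ v = u' ++ v') : u = u' := by
  have hp : u <+: u' ++ v' := h ▸ prefix_append u v
  rcases le_total u.length u'.length with hle | hle
  · exact hu.eq_of_prefix hu' (prefix_of_prefix_length_le hp (prefix_append u' v') hle)
  · exact (hu'.eq_of_prefix hu (prefix_of_prefix_length_le (prefix_append u' v') hp hle)).symm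

theorem IsLukasiewicz.succ_cons_append {a : ℕ} {u v : List ℕ} (hu : u.IsLukasiewicz)
    (hv : (a :: v).IsLukasiewicz) : ((a + 1) :: (u ++ v)).IsLukasiewicz := by
  obtain ⟨hus, hup⟩ := hu
  obtain ⟨hvs, hvp⟩ := hv
  simp only [sum_cons, length_cons] at hvs
  refine ⟨by simp only [sum_cons, sum_append, length_cons, length_append]; omega, ?_⟩
  rintro (_ | j) - hj
  · simp
  simp only [length_cons, length_append] at hj
  rw [take_succ_cons, sum_cons]
  rcases lt_or_ge j u.length with hju | hju
  · rw [take_append_of_le_length hju.le]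
    rcases j.eq_zero_or_pos with rfl | hj0
    · simp
    · have := hup j hj0 hju
      omega
  · obtain ⟨i, rfl⟩ := Nat.exists_eq_add_of_le hju
    have := hvp (i + 1) (by omega) (by simp; omega)
    rw [take_succ_cons, sum_cons] at this
    rw [take_length_add_append, sum_append]
    omega

theorem IsLukasiewicz.exists_eq_succ_cons_append {a : ℕ} {w : List ℕ}
    (h : (a :: w).IsLukasiewicz) (hw : w ≠ []) :
    ∃ b u v, a = b + 1 ∧ w = u ++ v ∧ u.IsLukasiewicz ∧ (b :: v).IsLukasiewicz := by
  obtain ⟨hs, hp⟩ := h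
  simp only [sum_cons, length_cons] at hs
  have ha : 1 ≤ a := by
    simpa using hp 1 one_pos (by simpa [Nat.one_lt_succ_succ] using length_pos_iff.2 hw)
  -- cut `w` at the first prefix whose sum falls below its length
  have hex : ∃ m, (w.take m).sum + 1 ≤ m := ⟨w.length, by rw [take_length]; omega⟩
  set m := Nat.find hex
  have hm : (w.take m).sum + 1 ≤ m := Nat.find_spec hex
  have hbefore : ∀ j < m, j ≤ (w.take j).sum := fun j hj => by
    have := Nat.find_min hex hj; omega
  have hm0 : 0 < m := by omega
  have hmw : m ≤ w.length := by
    by_contra! hlt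
    rw [take_of_length_le hlt.le] at hm
    have := hbefore w.length hlt
    rw [take_length] at this
    omega
  have hum : (w.take m).sum + 1 = m := by
    have h₁ := hbefore (m - 1) (by omega)
    have h₂ := sum_take_succ w (m - 1) (by omega)
    rw [Nat.sub_add_cancel hm0] at h₂
    omega
  refine ⟨a - 1, w.take m, w.drop m, by omega, (take_append_drop m w).symm,
    ⟨by simpa [hmw] using hum, fun j hj0 hj => ?_⟩, ⟨?_, fun j hj0 hj => ?_⟩⟩
  · rw [length_take, min_eq_left hmw] at hj
    rw [take_take, min_eq_left hj.le]
    exact hbefore j hj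
  · have := congrArg sum (take_append_drop m w)
    rw [sum_append] at this
    simp only [sum_cons, length_cons, length_drop]
    omega
  · obtain ⟨i, rfl⟩ := Nat.exists_eq_add_of_le' hj0
    simp only [length_cons, length_drop] at hj
    have := hp (m + i + 1) (by omega) (by simp; omega)
    rw [take_succ_cons, sum_cons, take_add, sum_append] at this
    rw [take_succ_cons, sum_cons]
    omega

theorem take_rotate_eq_take_drop_append_self {α : Type*} {d : List α} {k j : ℕ}
    (hk : k ≤ d.length) (hj : j ≤ d.length) :
    (d.rotate k).take j = ((d ++ d).drop k).take j := by
  rw [rotate_eq_drop_append_take hk, drop_append_of_le_length hk, take_append, take_append,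
    take_take, length_drop]
  congr 2
  omega

def cyclicExcess (d : List ℕ) (m : ℕ) : ℤ := ((d ++ d).take m).sum - m

theorem cyclicExcess_add_length {d : List ℕ} (hd : d.sum + 1 = d.length) {m : ℕ}
    (hm : m ≤ d.length) : cyclicExcess d (m + d.length) = cyclicExcess d m - 1 := by
  have h : ((d ++ d).take (m + d.length)).sum = ((d ++ d).take m).sum + d.sum := by
    rw [add_comm, take_add, take_left, drop_left, take_append_of_le_length hm, sum_append,
      add_comm]
  simp only [cyclicExcess, h]
  push_cast [← hd]
  ring

theorem isLukasiewicz_rotate_iff {d : List ℕ} (hd : d.sum + 1 = d.length) {k : ℕ}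
    (hk : k ≤ d.length) : (d.rotate k).IsLukasiewicz ↔
      ∀ j, 0 < j → j < d.length → cyclicExcess d k ≤ cyclicExcess d (k + j) := by
  have hstep : ∀ j, j < d.length →
      (j ≤ ((d.rotate k).take j).sum ↔ cyclicExcess d k ≤ cyclicExcess d (k + j)) := by
    intro j hj
    have h : ((d.rotate k).take j).sum + ((d ++ d).take k).sum = ((d ++ d).take (k + j)).sum := by
      rw [take_rotate_eq_take_drop_append_self hk hj.le, take_add, sum_append, add_comm]
    simp only [cyclicExcess]
    omega
  simp only [IsLukasiewicz, length_rotate, (rotate_perm d k).sum_eq, hd, true_and]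
  exact forall_congr' fun j => imp_congr_right fun _ => imp_congr_right fun hj => hstep j hj

theorem exists_isLukasiewicz_rotate {d : List ℕ} (hd : d.sum + 1 = d.length) :
    ∃ k < d.length, (d.rotate k).IsLukasiewicz := by
  have hmin : ∃ k, k < d.length ∧ ∀ i < d.length, cyclicExcess d k ≤ cyclicExcess d i := by
    obtain ⟨k, hk, hkmin⟩ := (Finset.range d.length).exists_min_image (cyclicExcess d)
      ⟨0, Finset.mem_range.2 (by omega)⟩
    exact ⟨k, Finset.mem_range.1 hk, fun i hi => hkmin i (Finset.mem_range.2 hi)⟩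
  -- the *first* minimiser lies strictly below all earlier values, which handles wrap-around
  obtain ⟨hk, hkmin⟩ := Nat.find_spec hmin
  refine ⟨Nat.find hmin, hk, (isLukasiewicz_rotate_iff hd hk.le).2 fun j _ hj => ?_⟩
  rcases lt_or_ge (Nat.find hmin + j) d.length with hkj | hkj
  · exact hkmin _ hkj
  · set m := Nat.find hmin + j - d.length
    obtain ⟨i, hi, hlt⟩ : ∃ i < d.length, cyclicExcess d i < cyclicExcess d m := by
      have hm := Nat.find_min hmin (show m < Nat.find hmin by omega)
      push Not at hm
      exact hm (by omega)
    have hper := cyclicExcess_add_length hd (show m ≤ d.length by omega)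
    rw [show m + d.length = Nat.find hmin + j by omega] at hper
    linarith [hkmin i hi]

theorem isLukasiewicz_rotate_unique {d : List ℕ} (hd : d.sum + 1 = d.length) {a b : ℕ}
    (hab : a < b) (hb : b < d.length) (ha' : (d.rotate a).IsLukasiewicz)
    (hb' : (d.rotate b).IsLukasiewicz) : False := by
  have h₁ := (isLukasiewicz_rotate_iff hd (hab.trans hb).le).1 ha' (b - a) (by omega) (by omega)
  have h₂ := (isLukasiewicz_rotate_iff hd hb.le).1 hb' (a + d.length - b) (by omega) (by omega)
  rw [Nat.add_sub_cancel' hab.le] at h₁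
  rw [Nat.add_sub_cancel' (by omega), cyclicExcess_add_length hd (by omega)] at h₂
  linarith

/-- The cycle lemma of Dvoretzky and Motzkin. -/
theorem existsUnique_isLukasiewicz_rotate {d : List ℕ} (hd : d.sum + 1 = d.length) :
    ∃! k, k < d.length ∧ (d.rotate k).IsLukasiewicz := by
  obtain ⟨k, hk, hkL⟩ := exists_isLukasiewicz_rotate hd
  refine ⟨k, ⟨hk, hkL⟩, fun k' ⟨hk', hk'L⟩ => ?_⟩
  rcases lt_trichotomy k' k with h | h | h
  · exact (isLukasiewicz_rotate_unique hd h hk hk'L hkL).elim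
  · exact h
  · exact (isLukasiewicz_rotate_unique hd h hk' hkL hk'L).elim

theorem natCard_subtype_and_mul_eq_of_existsUnique_rotate {α : Type*} {P Q : List α → Prop}
    {m : ℕ} (hlen : ∀ w, P w → w.length = m) (hrot : ∀ w k, P w → P (w.rotate k))
    (huniq : ∀ w, P w → ∃! k, k < m ∧ Q (w.rotate k)) :
    Nat.card {w // P w ∧ Q w} * m = Nat.card {w // P w} := by
  have hback : ∀ w, P w → ∀ k ≤ m, (w.rotate (m - k)).rotate k = w := fun w hw k hk => by
    rw [rotate_rotate, Nat.sub_add_cancel hk, ← hlen w hw, rotate_length]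
  let f : {w // P w ∧ Q w} × Fin m → {w // P w} := fun x =>
    ⟨x.1.1.rotate (m - x.2), hrot _ _ x.1.2.1⟩
  have hf : f.Bijective := by
    constructor
    · rintro ⟨⟨w, hwP, hwQ⟩, k⟩ ⟨⟨w', hw'P, hw'Q⟩, k'⟩ h
      have hs : w.rotate (m - k) = w'.rotate (m - k') := congrArg Subtype.val h
      have hQ : Q ((w.rotate (m - k)).rotate k) := by rwa [hback w hwP k k.2.le]
      have hQ' : Q ((w.rotate (m - k)).rotate k') := by rwa [hs, hback w' hw'P k' k'.2.le]
      have hkk : k = k' := Fin.ext <|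
        (huniq _ (hrot _ _ hwP)).unique ⟨k.2, hQ⟩ ⟨k'.2, hQ'⟩
      subst hkk
      simp only [Prod.mk.injEq, and_true, Subtype.mk.injEq]
      exact rotate_injective _ hs
    · rintro ⟨s, hs⟩
      obtain ⟨k, ⟨hk, hkQ⟩, -⟩ := huniq s hs
      refine ⟨⟨⟨s.rotate k, hrot s k hs, hkQ⟩, ⟨k, hk⟩⟩, Subtype.ext ?_⟩
      change (s.rotate k).rotate (m - k) = s
      rw [rotate_rotate, Nat.add_sub_cancel' hk.le, ← hlen s hs, rotate_length]
  rw [← Nat.card_congr (Equiv.ofBijective f hf), Nat.card_prod, Nat.card_fin]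

end List

namespace BinTree

/-- The initial vertices other than the root, in preorder of the plane tree in which the
children of an initial vertex `v` are the right children hanging off the L-path of `v`; the
out-degree of `v` there is `l(v)`, so `lukWord` is that plane tree's Łukasiewicz word. -/
def rightInitials : BinTree → List (List Bool)
  | leaf => []
  | node l r => [true] :: ((rightInitials r).map (List.cons true) ++
      (rightInitials l).map (List.cons false))

def initials (t : BinTree) : List (List Bool) := [] :: t.rightInitials

def lukWord (t : BinTree) : List ℕ := t.initials.map t.pathLen

theorem length_rightInitials (t : BinTree) : t.rightInitials.length = t.internals := by
  induction t with
  | leaf => rfl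
  | node l r ihl ihr =>
    simp only [rightInitials, internals, List.length_cons, List.length_append, List.length_map,
      ihl, ihr]
    omega

theorem length_lukWord (t : BinTree) : t.lukWord.length = t.internals + 1 := by
  simp [lukWord, initials, length_rightInitials]

theorem lukWord_leaf : leaf.lukWord = [0] := rfl

theorem lukWord_node (l r : BinTree) :
    (node l r).lukWord = (l.leftLen + 1) :: (r.lukWord ++ l.lukWord.tail) := by
  simp only [lukWord, initials, rightInitials, List.map_cons, List.map_append, List.map_map,
    List.tail_cons]
  rfl

theorem lukWord_eq_cons (t : BinTree) : t.lukWord = t.leftLen :: t.lukWord.tail := by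
  cases t <;> rfl

theorem isLukasiewicz_lukWord (t : BinTree) : t.lukWord.IsLukasiewicz := by
  induction t with
  | leaf => exact ⟨rfl, fun j hj hj' => by simp [lukWord_leaf] at hj'; omega⟩
  | node l r ihl ihr =>
    rw [lukWord_node]
    exact ihr.succ_cons_append (l.lukWord_eq_cons ▸ ihl)

theorem lukWord_injective : Function.Injective lukWord := by
  intro t t' h
  induction t generalizing t' with
  | leaf => cases t' <;> simp_all [lukWord_leaf, lukWord_node]
  | node l r ihl ihr =>
    cases t' with
    | leaf => simp [lukWord_leaf, lukWord_node] at h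
    | node l' r' =>
      rw [lukWord_node, lukWord_node, List.cons_eq_cons, Nat.add_right_cancel_iff] at h
      obtain ⟨hlen, htail⟩ := h
      have hr := (isLukasiewicz_lukWord r).eq_of_append_eq_append (isLukasiewicz_lukWord r') htail
      have hl : l.lukWord = l'.lukWord := by
        rw [hr] at htail
        rw [lukWord_eq_cons l, lukWord_eq_cons l', hlen, List.append_cancel_left htail]
      rw [ihl hl, ihr hr]

theorem exists_lukWord_eq {w : List ℕ} (hw : w.IsLukasiewicz) : ∃ t : BinTree, t.lukWord = w := by
  induction h : w.length using Nat.strong_induction_on generalizing w with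
  | _ n ih =>
  obtain _ | ⟨a, w⟩ := w
  · simp [List.IsLukasiewicz] at hw
  rcases eq_or_ne w [] with rfl | hne
  · exact ⟨leaf, by simpa [List.IsLukasiewicz, lukWord_leaf, eq_comm] using hw.1⟩
  obtain ⟨b, u, v, rfl, rfl, hu, hv⟩ := hw.exists_eq_succ_cons_append hne
  obtain ⟨r, hr⟩ := ih u.length (by simp [← h]) hu rfl
  obtain ⟨l, hl⟩ := ih (b :: v).length (by simp [← h]; have := hu.1; omega) hv rfl
  have hb : l.leftLen = b := by simpa [hl] using (lukWord_eq_cons l).symm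
  exact ⟨node l r, by rw [lukWord_node, hr, hl, hb, List.tail_cons]⟩

theorem mem_rightInitials_iff {t : BinTree} {q : List Bool} :
    q ∈ t.rightInitials ↔ (t.subtreeAt q).isSome ∧ q.getLast? = some true := by
  induction t generalizing q with
  | leaf => cases q <;> simp [rightInitials, subtreeAt]
  | node l r ihl ihr =>
    rcases q with _ | ⟨_ | _, q⟩
    · simp [rightInitials]
    · simp [rightInitials, subtreeAt, ihl, List.getLast?_cons]
      cases q.getLast? <;> simp
    · rcases q with _ | ⟨b, q⟩
      · simp [rightInitials, subtreeAt]
      · simp [rightInitials, subtreeAt, ihr, List.getLast?_cons]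

theorem mem_initials_iff {t : BinTree} {q : List Bool} : q ∈ t.initials ↔ t.IsInitial q := by
  rcases eq_or_ne q [] with rfl | hq
  · cases t <;> simp [initials, IsInitial, subtreeAt]
  · simp [initials, IsInitial, mem_rightInitials_iff, hq]

theorem nodup_rightInitials (t : BinTree) : t.rightInitials.Nodup := by
  induction t with
  | leaf => exact List.nodup_nil
  | node l r ihl ihr =>
    refine List.nodup_cons.2 ⟨by simp [mem_rightInitials_iff], List.nodup_append.2
      ⟨ihr.map List.cons_injective, ihl.map List.cons_injective, ?_⟩⟩
    simp

theorem nodup_initials (t : BinTree) : t.initials.Nodup :=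
  List.nodup_cons.2 ⟨by simp [mem_rightInitials_iff], t.nodup_rightInitials⟩

theorem mem_vertices_iff {t : BinTree} {q : List Bool} :
    q ∈ t.vertices ↔ (t.subtreeAt q).isSome := by
  induction t generalizing q with
  | leaf => cases q <;> simp [vertices, subtreeAt]
  | node l r ihl ihr => rcases q with _ | ⟨_ | _, q⟩ <;> simp [vertices, subtreeAt, ihl, ihr]

end BinTree

namespace ColoredBinTree

theorem colorNum_eq_sum_initials (B : ColoredBinTree) :
    B.colorNum = (B.tree.initials.map B.color).sum := by
  classical
  rw [colorNum, ← List.sum_toFinset _ B.tree.nodup_vertices,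
    ← List.sum_toFinset _ B.tree.nodup_initials]
  refine (Finset.sum_subset (fun q hq => ?_) fun q _ hq => B.color_eq_zero q ?_).symm
  · simp only [List.mem_toFinset, BinTree.mem_initials_iff] at hq ⊢
    exact BinTree.mem_vertices_iff.2 hq.1
  · simpa [BinTree.mem_initials_iff] using hq

def labeledWord (B : ColoredBinTree) : List (ℕ × ℕ) :=
  B.tree.initials.map fun q => (B.tree.pathLen q, B.color q)

theorem map_fst_labeledWord (B : ColoredBinTree) :
    B.labeledWord.map Prod.fst = B.tree.lukWord := by
  simp [labeledWord, BinTree.lukWord, Function.comp_def]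

theorem map_snd_labeledWord (B : ColoredBinTree) :
    B.labeledWord.map Prod.snd = B.tree.initials.map B.color := by
  simp [labeledWord, Function.comp_def]

theorem two_mul_snd_le_fst_of_mem_labeledWord {B : ColoredBinTree} {y : ℕ × ℕ}
    (hy : y ∈ B.labeledWord) : 2 * y.2 ≤ y.1 := by
  obtain ⟨q, hq, rfl⟩ := List.mem_map.1 hy
  have := B.color_le q (BinTree.mem_initials_iff.1 hq)
  omega

theorem labeledWord_injective : Function.Injective labeledWord := by
  rintro ⟨t, c, hc, hc0⟩ ⟨t', c', hc', hc0'⟩ h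
  obtain rfl : t = t' := BinTree.lukWord_injective <| by
    simpa only [map_fst_labeledWord] using congrArg (List.map Prod.fst) h
  have hcc : t.initials.map c = t.initials.map c' := by
    simpa only [map_snd_labeledWord] using congrArg (List.map Prod.snd) h
  obtain rfl : c = c' := funext fun q => by
    by_cases hq : t.IsInitial q
    · exact List.map_inj_left.1 hcc q (BinTree.mem_initials_iff.2 hq)
    · rw [hc0 q hq, hc0' q hq]
  rfl

theorem exists_labeledWord_eq {w : List (ℕ × ℕ)} (hw : (w.map Prod.fst).IsLukasiewicz)
    (hw₂ : ∀ y ∈ w, 2 * y.2 ≤ y.1) : ∃ B : ColoredBinTree, B.labeledWord = w := by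
  obtain ⟨t, ht⟩ := BinTree.exists_lukWord_eq hw
  have hlen : (w.map Prod.snd).length = t.initials.length := by
    simpa [BinTree.lukWord] using congrArg List.length ht.symm
  obtain ⟨c, hc, hc0⟩ := t.nodup_initials.exists_map_eq hlen 0
  have hword : t.initials.map (fun q => (t.pathLen q, c q)) = w := by
    rw [← List.zip_map', ← BinTree.lukWord, ht, hc, List.zip_map', List.map_id'' fun _ => rfl]
  refine ⟨⟨t, c, fun q hq => ?_, fun q hq => hc0 q (mt BinTree.mem_initials_iff.1 hq)⟩, hword⟩
  have := hw₂ _ (hword ▸ List.mem_map_of_mem (BinTree.mem_initials_iff.2 hq))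
  simp only at this
  omega

end ColoredBinTree

def IsColoredWord (n p : ℕ) (w : List (ℕ × ℕ)) : Prop :=
  w.length = n + 1 ∧ (w.map Prod.fst).sum = n ∧ (w.map Prod.snd).sum = p ∧ ∀ y ∈ w, 2 * y.2 ≤ y.1

theorem ColoredBinTree.isColoredWord_labeledWord_iff {B : ColoredBinTree} {n p : ℕ} :
    IsColoredWord n p B.labeledWord ↔ B.tree.internals = n ∧ B.colorNum = p := by
  have hlen : B.labeledWord.length = B.tree.internals + 1 := by
    rw [← List.length_map Prod.fst, map_fst_labeledWord, BinTree.length_lukWord]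
  have hsum : (B.labeledWord.map Prod.fst).sum = B.tree.internals := by
    have := (BinTree.isLukasiewicz_lukWord B.tree).1
    rw [BinTree.length_lukWord] at this
    rw [map_fst_labeledWord]
    omega
  simp only [IsColoredWord, hlen, hsum, map_snd_labeledWord, ← colorNum_eq_sum_initials]
  constructor
  · rintro ⟨-, h, h', -⟩
    exact ⟨h, h'⟩
  · rintro ⟨h, h'⟩
    exact ⟨by omega, h, h', fun _ => two_mul_snd_le_fst_of_mem_labeledWord⟩

theorem natCard_coloredBinTree_eq (n p : ℕ) :
    Nat.card {B : ColoredBinTree // B.tree.internals = n ∧ B.colorNum = p} =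
      Nat.card {w // IsColoredWord n p w ∧ (w.map Prod.fst).IsLukasiewicz} := by
  refine Nat.card_congr (Equiv.ofBijective (fun B => ⟨B.1.labeledWord,
    ColoredBinTree.isColoredWord_labeledWord_iff.2 B.2,
    B.1.map_fst_labeledWord ▸ B.1.tree.isLukasiewicz_lukWord⟩) ⟨fun B B' h => ?_, ?_⟩)
  · exact Subtype.ext (ColoredBinTree.labeledWord_injective (congrArg Subtype.val h))
  · rintro ⟨w, hw, hwL⟩
    obtain ⟨B, rfl⟩ := ColoredBinTree.exists_labeledWord_eq hwL hw.2.2.2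
    exact ⟨⟨B, ColoredBinTree.isColoredWord_labeledWord_iff.1 hw⟩, rfl⟩

theorem natCard_isColoredWord_isLukasiewicz_mul (n p : ℕ) :
    Nat.card {w // IsColoredWord n p w ∧ (w.map Prod.fst).IsLukasiewicz} * (n + 1) =
      Nat.card {w // IsColoredWord n p w} := by
  refine List.natCard_subtype_and_mul_eq_of_existsUnique_rotate (fun w hw => hw.1)
    (fun w k ⟨hlen, hfst, hsnd, hw₂⟩ => ⟨?_, ?_, ?_, ?_⟩) fun w ⟨hlen, hfst, _⟩ => ?_
  · rwa [List.length_rotate]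
  · rwa [List.map_rotate, (List.rotate_perm _ _).sum_eq]
  · rwa [List.map_rotate, (List.rotate_perm _ _).sum_eq]
  · exact fun y hy => hw₂ y (List.mem_rotate.1 hy)
  · simpa [List.map_rotate, hlen] using
      List.existsUnique_isLukasiewicz_rotate (d := w.map Prod.fst) (by simp [hlen, hfst])

theorem natCard_isColoredWord {n p : ℕ} (h : 2 * p ≤ n) :
    Nat.card {w // IsColoredWord n p w} =
      (n + p).choose p * (2 * n - 2 * p).choose (n - 2 * p) := by
  -- a letter `(a, c)` with `2 * c ≤ a` is the same as a pair `(c, a - 2 * c)`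
  have e : {w // IsColoredWord n p w} ≃
      {c : List ℕ // c.length = n + 1 ∧ c.sum = p} ×
        {d : List ℕ // d.length = n + 1 ∧ d.sum = n - 2 * p} := by
    refine
      { toFun := fun w => (⟨w.1.map Prod.snd, by simp [w.2.1], w.2.2.2.1⟩,
          ⟨w.1.map fun y => y.1 - 2 * y.2, by simp [w.2.1], ?_⟩)
        invFun := fun cd => ⟨(cd.1.1.zip cd.2.1).map fun x => (x.2 + 2 * x.1, x.1), ?_⟩
        left_inv := ?_
        right_inv := ?_ }
    · obtain ⟨w, -, hfst, hsnd, hw₂⟩ := w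
      have hsplit : (w.map fun y => y.1 - 2 * y.2 + 2 * y.2).sum = n := by
        rw [List.map_congr_left fun y hy => Nat.sub_add_cancel (hw₂ y hy), hfst]
      rw [List.sum_map_add, List.sum_map_mul_left, hsnd] at hsplit
      simp only
      omega
    · obtain ⟨⟨c, hc, hcs⟩, ⟨d, hd, hds⟩⟩ := cd
      refine ⟨by simp [hc, hd], ?_, ?_, fun y hy => ?_⟩
      · simp only [List.map_map, Function.comp_def, List.sum_map_add, List.sum_map_mul_left]
        rw [List.map_snd_zip (by omega), List.map_fst_zip (by omega)]
        omega
      · simpa [Function.comp_def, List.map_fst_zip, hc, hd] using hcs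
      · obtain ⟨x, -, rfl⟩ := List.mem_map.1 hy
        dsimp only
        omega
    · rintro ⟨w, -, -, -, hw₂⟩
      refine Subtype.ext ?_
      simp only [List.zip_map', List.map_map, Function.comp_def]
      conv_rhs => rw [← List.map_id w]
      exact List.map_congr_left fun y hy => Prod.ext (Nat.sub_add_cancel (hw₂ y hy)) rfl
    · rintro ⟨⟨c, hc, hcs⟩, ⟨d, hd, hds⟩⟩
      refine Prod.ext (Subtype.ext ?_) (Subtype.ext ?_)
      · simpa [Function.comp_def] using List.map_fst_zip (by omega)
      · simpa [Function.comp_def] using List.map_snd_zip (by omega)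
  rw [Nat.card_congr e, Nat.card_prod, List.natCard_length_sum_eq, List.natCard_length_sum_eq,
    show n + 1 + p - 1 = n + p by omega, show n + 1 + (n - 2 * p) - 1 = 2 * n - 2 * p by omega]

/-- **Counting colored binary trees by color number.** For all nonnegative integers `n`
and `p` with `p ≤ ⌊n/2⌋`, the number `f_{n,p}` of colored binary trees with `n`
internal vertices and color number `p` equals `(1/(n+1)) C(n+p, p) C(2n-2p, n-2p)`. -/
theorem card_colored_binary_trees (n p : ℕ) (hp : p ≤ n / 2) :
    (Nat.card {B : ColoredBinTree // B.tree.internals = n ∧ B.colorNum = p} : ℚ) =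
      1 / (n + 1) * ((n + p).choose p) * ((2 * n - 2 * p).choose (n - 2 * p)) := by
  have key : Nat.card {B : ColoredBinTree // B.tree.internals = n ∧ B.colorNum = p} * (n + 1) =
      (n + p).choose p * (2 * n - 2 * p).choose (n - 2 * p) := by
    rw [natCard_coloredBinTree_eq, natCard_isColoredWord_isLukasiewicz_mul,
      natCard_isColoredWord (by omega)]
  rw [← Nat.cast_inj (R := ℚ), Nat.cast_mul, Nat.cast_mul, Nat.cast_succ] at key
  rw [mul_assoc, ← key]
  field_simp
end

section
/- Let f(x,y) = \sum_{n ≥ 0} \sum_{p=0}^{\lfloor n/2 \rfloor} f_{n,p} y^p x^n be a formal power series in two variables over ℚ with constant term f(0,0) = 1 satisfying the functional equation f(x,y) · (1 - y x^2 f(x,y)^2) · (1 - x f(x,y)) = 1. Then for every positive integer m and all nonnegative integers n and p with p ≤ \lfloor n/2 \rfloor, the coefficient of y^p x^n in f(x,y)^m equals (m/(n+m)) \binom{m+n+p-1}{p} \binom{m+2n-2p-1}{n-2p}. -/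
/-!
Multiplying the functional equation by `f^k` gives
`f^(k+1) = f^k + x f^(k+2) + x² y f^(k+3) - x³ y f^(k+4)`. Read on coefficients, this determines
`[x^n y^p] f^m` for `m > 0` by induction on `n` and then on `m`, starting from the values `[p = 0]`
at `n = 0` and `0` at `m = 0`. The closed form satisfies the same recurrence: with `n = 2p + q` and
`s = m + n - 1` it reads `m/(s+1) · C(p+s, p) · C(q+s, q)`, and once every binomial occurring in
one instance of the recurrence is written as a rational multiple of two of them, the recurrence
becomes a polynomial identity.
-/

namespace Nat

variable {K : Type*} [Field K] [CharZero K]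

theorem cast_choose_add_one_add_one (a s : ℕ) :
    ((a + 1 + (s + 1)).choose (a + 1) : K) = (a + s + 2) / (a + 1) * (a + (s + 1)).choose a := by
  have h : ((a + (s + 1) + 1 : ℕ) : K) * (a + (s + 1)).choose a =
      (a + (s + 1) + 1).choose (a + 1) * (a + 1 : ℕ) := by
    exact_mod_cast add_one_mul_choose_eq (a + (s + 1)) a
  rw [show a + 1 + (s + 1) = a + (s + 1) + 1 by ring, div_mul_eq_mul_div,
    eq_div_iff (cast_add_one_ne_zero a)]
  push_cast at h
  linear_combination -h

theorem cast_choose_add_one (a s : ℕ) :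
    ((a + 1 + s).choose (a + 1) : K) = (s + 1) / (a + 1) * (a + (s + 1)).choose a := by
  have h : ((a + (s + 1)).choose (a + 1) : K) * (a + 1 : ℕ) =
      (a + (s + 1)).choose a * (s + 1 : ℕ) := by
    have := choose_succ_right_eq (a + (s + 1)) a
    rw [Nat.add_sub_cancel_left] at this
    exact_mod_cast this
  rw [show a + 1 + s = a + (s + 1) by ring, div_mul_eq_mul_div,
    eq_div_iff (cast_add_one_ne_zero a)]
  push_cast at h
  linear_combination h

end Nat

noncomputable def coloredBinaryCoeff (m n p : ℕ) : ℚ :=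
  if 2 * p ≤ n then
    (m : ℚ) / (n + m) * ((m + n + p - 1).choose p) * ((m + 2 * n - 2 * p - 1).choose (n - 2 * p))
  else 0

namespace coloredBinaryCoeff

open Nat

theorem eq_div_mul_choose_mul_choose {m n p q s : ℕ} (hn : n = 2 * p + q) (hs : m + n = s + 1) :
    coloredBinaryCoeff m n p = m / (s + 1) * (p + s).choose p * (q + s).choose q := by
  have hcast : (n : ℚ) + m = s + 1 := by exact_mod_cast (by omega : n + m = s + 1)
  rw [coloredBinaryCoeff, if_pos (by omega), hcast, show m + n + p - 1 = p + s by omega,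
    show m + 2 * n - 2 * p - 1 = q + s by omega, show n - 2 * p = q by omega]

theorem of_lt {m n p : ℕ} (h : n < 2 * p) : coloredBinaryCoeff m n p = 0 := by
  rw [coloredBinaryCoeff, if_neg (by omega)]

@[simp] theorem zero_left (n p : ℕ) : coloredBinaryCoeff 0 n p = 0 := by
  simp [coloredBinaryCoeff]

theorem zero_middle {m : ℕ} (hm : 0 < m) (p : ℕ) :
    coloredBinaryCoeff m 0 p = if p = 0 then 1 else 0 := by
  rcases Nat.eq_zero_or_pos p with rfl | hp
  · rw [eq_div_mul_choose_mul_choose (p := 0) (q := 0) (s := m - 1) rfl (by omega), if_pos rfl]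
    have : ((m - 1 : ℕ) : ℚ) + 1 = m := by exact_mod_cast (by omega : m - 1 + 1 = m)
    simp [this, div_self (by positivity : (m : ℚ) ≠ 0)]
  · rw [of_lt (by omega), if_neg (by omega)]

theorem succ_eq_of_eq_two_mul_add (k p q : ℕ) {n : ℕ} (hn : n = 2 * (p + 1) + (q + 1)) :
    coloredBinaryCoeff (k + 1) n (p + 1) = coloredBinaryCoeff k n (p + 1)
      + coloredBinaryCoeff (k + 2) (n - 1) (p + 1) + coloredBinaryCoeff (k + 3) (n - 2) p
      - coloredBinaryCoeff (k + 4) (n - 3) p := by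
  set r := k + 2 * p + q + 2
  rw [eq_div_mul_choose_mul_choose (p := p + 1) (q := q + 1) (s := r + 1) hn (by omega),
    eq_div_mul_choose_mul_choose (p := p + 1) (q := q + 1) (s := r) hn (by omega),
    eq_div_mul_choose_mul_choose (p := p + 1) (q := q) (s := r + 1) (by omega) (by omega),
    eq_div_mul_choose_mul_choose (p := p) (q := q + 1) (s := r + 1) (by omega) (by omega),
    eq_div_mul_choose_mul_choose (p := p) (q := q) (s := r + 1) (by omega) (by omega),
    cast_choose_add_one_add_one p, cast_choose_add_one p, cast_choose_add_one_add_one q,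
    cast_choose_add_one q]
  simp only [r]
  push_cast
  field_simp
  ring

theorem succ_eq_of_eq_add_one (k q : ℕ) {n : ℕ} (hn : n = q + 1) :
    coloredBinaryCoeff (k + 1) n 0 = coloredBinaryCoeff k n 0
      + coloredBinaryCoeff (k + 2) (n - 1) 0 := by
  set r := k + q
  rw [eq_div_mul_choose_mul_choose (p := 0) (q := q + 1) (s := r + 1) (by omega) (by omega),
    eq_div_mul_choose_mul_choose (p := 0) (q := q + 1) (s := r) (by omega) (by omega),
    eq_div_mul_choose_mul_choose (p := 0) (q := q) (s := r + 1) (by omega) (by omega),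
    cast_choose_add_one_add_one q, cast_choose_add_one q]
  simp only [r, choose_zero_right]
  push_cast
  field_simp
  ring

theorem succ_eq_of_eq_two_mul (k p : ℕ) {n : ℕ} (hn : n = 2 * (p + 1)) :
    coloredBinaryCoeff (k + 1) n (p + 1) = coloredBinaryCoeff k n (p + 1)
      + coloredBinaryCoeff (k + 3) (n - 2) p := by
  set r := k + 2 * p + 1
  rw [eq_div_mul_choose_mul_choose (p := p + 1) (q := 0) (s := r + 1) (by omega) (by omega),
    eq_div_mul_choose_mul_choose (p := p + 1) (q := 0) (s := r) (by omega) (by omega),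
    eq_div_mul_choose_mul_choose (p := p) (q := 0) (s := r + 1) (by omega) (by omega),
    cast_choose_add_one_add_one p, cast_choose_add_one p]
  simp only [r, choose_zero_right]
  push_cast
  field_simp
  ring

end coloredBinaryCoeff

/-- The recurrence satisfied by `g m n p = [x^n y^p] f^m`, read off from
`f^(k+1) = f^k + x f^(k+2) + x² y f^(k+3) - x³ y f^(k+4)`. -/
def PowRecurrence {R : Type*} [Ring R] (g : ℕ → ℕ → ℕ → R) : Prop :=
  ∀ k n p, 1 ≤ n → g (k + 1) n p = g k n p + g (k + 2) (n - 1) p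
    + (if 2 ≤ n ∧ 1 ≤ p then g (k + 3) (n - 2) (p - 1) else 0)
    - (if 3 ≤ n ∧ 1 ≤ p then g (k + 4) (n - 3) (p - 1) else 0)

theorem PowRecurrence.eq_of_eq_on_boundary {R : Type*} [Ring R] {g h : ℕ → ℕ → ℕ → R}
    (hg : PowRecurrence g) (hh : PowRecurrence h) (hm0 : ∀ n p, 1 ≤ n → g 0 n p = h 0 n p)
    (hn0 : ∀ m p, 0 < m → g m 0 p = h m 0 p) {m : ℕ} (hm : 0 < m) (n p : ℕ) :
    g m n p = h m n p := by
  induction n using Nat.strong_induction_on generalizing m p with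
  | _ n ih =>
  rcases Nat.eq_zero_or_pos n with rfl | hn
  · exact hn0 m p hm
  clear hm
  induction m generalizing p with
  | zero => exact hm0 n p hn
  | succ k ihk =>
    rw [hg k n p hn, hh k n p hn, ihk, ih (n - 1) (by omega) (by omega : 0 < k + 2),
      ih (n - 2) (by omega) (by omega : 0 < k + 3), ih (n - 3) (by omega) (by omega : 0 < k + 4)]

theorem coloredBinaryCoeff.powRecurrence : PowRecurrence coloredBinaryCoeff := by
  intro k n p hn
  rcases lt_or_ge n (2 * p) with hlt | hle
  · simp +contextual (disch := omega) [coloredBinaryCoeff.of_lt]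
  obtain ⟨q, hq⟩ : ∃ q, n = 2 * p + q := ⟨n - 2 * p, by omega⟩
  rcases p with _ | p <;> rcases q with _ | q
  · omega
  · simpa using coloredBinaryCoeff.succ_eq_of_eq_add_one k q (by omega)
  · rw [if_pos (by omega), coloredBinaryCoeff.of_lt (m := k + 2) (by omega),
      coloredBinaryCoeff.succ_eq_of_eq_two_mul k p hq]
    simp +contextual (disch := omega) [coloredBinaryCoeff.of_lt]
  · rw [if_pos (by omega), if_pos (by omega), Nat.add_sub_cancel,
      coloredBinaryCoeff.succ_eq_of_eq_two_mul_add k p q hq]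

namespace MvPowerSeries

open Finsupp (single)

variable {R : Type*}

theorem coeff_X_pow_mul_X_pow_mul [Semiring R] (i j n p : ℕ) (g : MvPowerSeries (Fin 2) R) :
    coeff (single 0 n + single 1 p) (X 0 ^ i * X 1 ^ j * g) =
      if i ≤ n ∧ j ≤ p then coeff (single 0 (n - i) + single 1 (p - j)) g else 0 := by
  have hle : (single 0 i + single 1 j : Fin 2 →₀ ℕ) ≤ single 0 n + single 1 p ↔
      i ≤ n ∧ j ≤ p := by
    simp [Finsupp.le_def, Fin.forall_fin_two]
  have hsub : single 0 n + single 1 p - (single 0 i + single 1 j) =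
      single (0 : Fin 2) (n - i) + single 1 (p - j) := by
    ext t; fin_cases t <;> simp
  rw [X_pow_eq, X_pow_eq, monomial_mul_monomial, one_mul, coeff_monomial_mul]
  simp only [hle, hsub, one_mul]

variable [CommRing R] {f : MvPowerSeries (Fin 2) R}

theorem pow_add_one_eq_of_functional_eq
    (heq : f * (1 - X 1 * X 0 ^ 2 * f ^ 2) * (1 - X 0 * f) = 1) (k : ℕ) :
    f ^ (k + 1) = f ^ k + X 0 ^ 1 * X 1 ^ 0 * f ^ (k + 2) + X 0 ^ 2 * X 1 ^ 1 * f ^ (k + 3)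
      - X 0 ^ 3 * X 1 ^ 1 * f ^ (k + 4) := by
  linear_combination f ^ k * heq

theorem powRecurrence_coeff_pow (heq : f * (1 - X 1 * X 0 ^ 2 * f ^ 2) * (1 - X 0 * f) = 1) :
    PowRecurrence fun m n p => coeff (single 0 n + single 1 p) (f ^ m) := by
  intro k n p hn
  dsimp only
  rw [pow_add_one_eq_of_functional_eq heq, map_sub, map_add, map_add,
    coeff_X_pow_mul_X_pow_mul, coeff_X_pow_mul_X_pow_mul, coeff_X_pow_mul_X_pow_mul,
    if_pos ⟨hn, Nat.zero_le p⟩, Nat.sub_zero]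

theorem coeff_single_one_pow (heq : f * (1 - X 1 * X 0 ^ 2 * f ^ 2) * (1 - X 0 * f) = 1)
    (m p : ℕ) : coeff (single 1 p) (f ^ m) = if p = 0 then 1 else 0 := by
  rw [← zero_add (single 1 p), ← Finsupp.single_zero 0]
  induction m with
  | zero => simp [coeff_one]
  | succ k ih =>
    rw [pow_add_one_eq_of_functional_eq heq, map_sub, map_add, map_add,
      coeff_X_pow_mul_X_pow_mul, coeff_X_pow_mul_X_pow_mul, coeff_X_pow_mul_X_pow_mul, ih]
    simp

theorem coeff_pow_eq_coloredBinaryCoeff {f : MvPowerSeries (Fin 2) ℚ}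
    (heq : f * (1 - X 1 * X 0 ^ 2 * f ^ 2) * (1 - X 0 * f) = 1) {m : ℕ} (hm : 0 < m)
    (n p : ℕ) : coeff (single 0 n + single 1 p) (f ^ m) = coloredBinaryCoeff m n p := by
  refine (powRecurrence_coeff_pow heq).eq_of_eq_on_boundary coloredBinaryCoeff.powRecurrence
    ?_ ?_ hm n p
  · intro n p hn
    simp [coeff_one, Nat.one_le_iff_ne_zero.mp hn]
  · intro m p hm
    rw [Finsupp.single_zero, zero_add, coeff_single_one_pow heq, coloredBinaryCoeff.zero_middle hm]

end MvPowerSeries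

theorem coeff_pow_colored_binary_gf_general (f : MvPowerSeries (Fin 2) ℚ)
    (heq : f * (1 - MvPowerSeries.X 1 * MvPowerSeries.X 0 ^ 2 * f ^ 2) *
        (1 - MvPowerSeries.X 0 * f) = 1)
    (m : ℕ) (hm : 0 < m) (n p : ℕ) (hp : p ≤ n / 2) :
    MvPowerSeries.coeff (Finsupp.single 0 n + Finsupp.single 1 p) (f ^ m) =
      (m : ℚ) / (n + m) * ((m + n + p - 1).choose p) *
        ((m + 2 * n - 2 * p - 1).choose (n - 2 * p)) := by
  rw [MvPowerSeries.coeff_pow_eq_coloredBinaryCoeff heq hm, coloredBinaryCoeff, if_pos (by omega)]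

/-- **The generating function of colored binary trees.** Let
`f(x,y) = ∑_{n ≥ 0} ∑_{p=0}^{⌊n/2⌋} f_{n,p} y^p x^n` be a formal power series in two
variables over `ℚ` (here `x = X 0`, `y = X 1`, and the coefficient of `y^p x^n` vanishes
when `p > ⌊n/2⌋`) with constant term `1` satisfying the functional equation
`f(x,y) (1 - y x² f(x,y)²) (1 - x f(x,y)) = 1`. Then for every positive integer `m` and
all nonnegative integers `n, p` with `p ≤ ⌊n/2⌋`, the coefficient of `y^p x^n` in
`f(x,y)^m` equals `(m/(n+m)) C(m+n+p-1, p) C(m+2n-2p-1, n-2p)`. -/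
theorem coeff_pow_colored_binary_gf (f : MvPowerSeries (Fin 2) ℚ)
    (hshape : ∀ n p : ℕ, n / 2 < p →
      MvPowerSeries.coeff (Finsupp.single 0 n + Finsupp.single 1 p) f = 0)
    (hconst : MvPowerSeries.constantCoeff f = 1)
    (heq : f * (1 - MvPowerSeries.X 1 * MvPowerSeries.X 0 ^ 2 * f ^ 2) *
        (1 - MvPowerSeries.X 0 * f) = 1)
    (m : ℕ) (hm : 0 < m) (n p : ℕ) (hp : p ≤ n / 2) :
    MvPowerSeries.coeff (Finsupp.single 0 n + Finsupp.single 1 p) (f ^ m) =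
      (m : ℚ) / (n + m) * ((m + n + p - 1).choose p) *
        ((m + 2 * n - 2 * p - 1).choose (n - 2 * p)) :=
  coeff_pow_colored_binary_gf_general f heq m hm n p hp
end
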